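/- arXiv:1907.02759 — 8 statements merged into one kernel-verified Lean document; each statement's English description precedes it below -/
import Mathlib

section
/- Let F : U ⊆ ℝⁿ → ℝᵐ (m ≥ n ≥ 2) be continuously differentiable on a convex open set U, with F'(x) ≥ 0 entrywise for all x ∈ U, and satisfying the convexity inequality F(y) − F(x) ≥ F'(x)(y−x) pointwise for all x, y ∈ U. Let L > 0 and suppose x ∈ U satisfies max_{k=1,…,m} eₖᵀ F'(x)(eⱼ − eⱼ') ≥ L⁻¹ for all j ∈ {1,…,n}, where eⱼ is the j-th unit vector and eⱼ' = 𝟙 − eⱼ. Then the matrix F'(x) ∈ ℝ^{m×n} is injective, and its left inverse satisfies ‖F'(x)⁻¹‖_∞ ≤ L. -/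
/-!
Let `A = F'(x)`, a nonnegative matrix, and let `j` be an index where `|dⱼ|` attains `‖d‖_∞`;
replacing `d` by `-d` we may take `dⱼ = ‖d‖_∞`. Then `d ≥ dⱼ (eⱼ - eⱼ')` entrywise, so
`A d ≥ dⱼ A (eⱼ - eⱼ')` by monotonicity of `A`, and the largest entry of the right-hand side is at
least `L⁻¹ dⱼ`. Hence `‖A d‖_∞ ≥ L⁻¹ ‖d‖_∞`, which also gives injectivity.
-/

open Matrix Set

lemma iSup_le_pi_norm {κ : Type*} [Fintype κ] (v : κ → ℝ) : ⨆ k, v k ≤ ‖v‖ :=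
  Real.iSup_le (fun k => (le_abs_self _).trans (norm_le_pi_norm v k)) (norm_nonneg v)

namespace Matrix

/-- The vector `eⱼ - eⱼ'` of the paper. -/
def signVec {ι : Type*} [DecidableEq ι] (j : ι) : ι → ℝ := fun i => if i = j then 1 else -1

lemma smul_signVec_le {ι : Type*} [DecidableEq ι] {d : ι → ℝ} {j : ι}
    (hj : ∀ i, |d i| ≤ d j) : d j • signVec j ≤ d := by
  intro i
  by_cases hij : i = j
  · simp [signVec, hij]
  · simpa [signVec, hij] using neg_le_of_abs_le (hj i)

lemma mulVec_mono_of_nonneg {ι κ : Type*} [Fintype ι] {A : Matrix κ ι ℝ}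
    (hA : ∀ k i, 0 ≤ A k i) {v w : ι → ℝ} (hvw : v ≤ w) : A *ᵥ v ≤ A *ᵥ w := fun k =>
  dotProduct_le_dotProduct_of_nonneg_left hvw fun i => hA k i

lemma mul_le_norm_mulVec_of_abs_le {ι κ : Type*} [Fintype ι] [Fintype κ] [DecidableEq ι]
    {A : Matrix κ ι ℝ} (hA : ∀ k i, 0 ≤ A k i) {c : ℝ}
    {d : ι → ℝ} {j : ι} (hc : c ≤ ⨆ k, (A *ᵥ signVec j) k) (hj : ∀ i, |d i| ≤ d j) :
    c * d j ≤ ‖A *ᵥ d‖ := by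
  have hdj : 0 ≤ d j := (abs_nonneg _).trans (hj j)
  have hbdd : BddAbove (range fun k => (A *ᵥ d) k) := (finite_range _).bddAbove
  calc c * d j ≤ d j * ⨆ k, (A *ᵥ signVec j) k := by
        rw [mul_comm]; exact mul_le_mul_of_nonneg_left hc hdj
    _ = ⨆ k, (A *ᵥ (d j • signVec j)) k := by
        simp only [Real.mul_iSup_of_nonneg hdj, mulVec_smul, Pi.smul_apply, smul_eq_mul]
    _ ≤ ⨆ k, (A *ᵥ d) k := ciSup_mono hbdd (mulVec_mono_of_nonneg hA (smul_signVec_le hj))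
    _ ≤ ‖A *ᵥ d‖ := iSup_le_pi_norm _

theorem mul_norm_le_norm_mulVec {ι κ : Type*} [Fintype ι] [Fintype κ] [DecidableEq ι]
    {A : Matrix κ ι ℝ} (hA : ∀ k i, 0 ≤ A k i) {c : ℝ}
    (hc : ∀ j, c ≤ ⨆ k, (A *ᵥ signVec j) k) (d : ι → ℝ) : c * ‖d‖ ≤ ‖A *ᵥ d‖ := by
  rcases isEmpty_or_nonempty ι with _ | _
  · simp [Subsingleton.elim d 0]
  obtain ⟨j, hjmax⟩ := Finite.exists_max fun i => |d i|
  have hnorm : ‖d‖ = |d j| :=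
    le_antisymm ((pi_norm_le_iff_of_nonneg (abs_nonneg _)).2 hjmax) (norm_le_pi_norm d j)
  rcases le_total 0 (d j) with hpos | hneg
  · rw [hnorm, abs_of_nonneg hpos]
    exact mul_le_norm_mulVec_of_abs_le hA (hc j) fun i => (abs_of_nonneg hpos).symm ▸ hjmax i
  · have := mul_le_norm_mulVec_of_abs_le hA (hc j) (d := -d) fun i => by
      simpa [abs_of_nonpos hneg] using hjmax i
    rwa [mulVec_neg, norm_neg, Pi.neg_apply, ← abs_of_nonpos hneg, ← hnorm] at this

theorem injective_mulVec_of_mul_norm_le {ι κ : Type*} [Fintype ι] [Fintype κ]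
    {A : Matrix κ ι ℝ} {c : ℝ} (hc : 0 < c)
    (h : ∀ d, c * ‖d‖ ≤ ‖A *ᵥ d‖) : Function.Injective A.mulVec := by
  intro u v huv
  have hle := h (u - v)
  rw [mulVec_sub, huv, sub_self, norm_zero] at hle
  exact sub_eq_zero.mp (norm_le_zero_iff.mp (nonpos_of_mul_nonpos_right hle hc))

end Matrix

theorem stmt_0_general (n m : ℕ)
    (U : Set (Fin n → ℝ))
    (F' : (Fin n → ℝ) → Matrix (Fin m) (Fin n) ℝ)
    (hmono : ∀ x ∈ U, ∀ k j, 0 ≤ F' x k j)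
    (L : ℝ) (hL : 0 < L)
    (x : Fin n → ℝ) (hx : x ∈ U)
    (hcrit : ∀ j : Fin n,
      L⁻¹ ≤ ⨆ k, ((F' x).mulVec (fun i => if i = j then 1 else -1)) k) :
    Function.Injective ((F' x).mulVec) ∧
    ∀ d : Fin n → ℝ, L⁻¹ * ‖d‖ ≤ ‖(F' x).mulVec d‖ := by
  have hbound := mul_norm_le_norm_mulVec (hmono x hx) hcrit
  exact ⟨injective_mulVec_of_mul_norm_le (inv_pos.2 hL) hbound, hbound⟩

theorem stmt_0 (n m : ℕ) (hn : 2 ≤ n) (hnm : n ≤ m)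
    (U : Set (Fin n → ℝ)) (hUopen : IsOpen U) (hUconv : Convex ℝ U)
    (F : (Fin n → ℝ) → (Fin m → ℝ))
    (F' : (Fin n → ℝ) → Matrix (Fin m) (Fin n) ℝ)
    (hderiv : ∀ x ∈ U, HasFDerivAt F ((F' x).mulVecLin.toContinuousLinearMap) x)
    (hcont : ContinuousOn F' U)
    (hmono : ∀ x ∈ U, ∀ k j, 0 ≤ F' x k j)
    (hconv : ∀ x ∈ U, ∀ y ∈ U, (F' x).mulVec (y - x) ≤ F y - F x)
    (L : ℝ) (hL : 0 < L)
    (x : Fin n → ℝ) (hx : x ∈ U)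
    (hcrit : ∀ j : Fin n,
      L⁻¹ ≤ ⨆ k, ((F' x).mulVec (fun i => if i = j then 1 else -1)) k) :
    Function.Injective ((F' x).mulVec) ∧
    ∀ d : Fin n → ℝ, L⁻¹ * ‖d‖ ≤ ‖(F' x).mulVec d‖ :=
  stmt_0_general n m U F' hmono L hL x hx hcrit
end

section
/- Let F : U ⊆ ℝⁿ → ℝᵐ, m ≥ n ≥ 2, be continuously differentiable, pointwise convex and monotonic on a convex open set U containing [−1,3]ⁿ. If F'(−eⱼ + 3eⱼ')(eⱼ − 3eⱼ') ≰ 0 (i.e. has at least one positive entry) for all j ∈ {1,…,n}, then F is injective on [0,1]ⁿ. -/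
/-!
Suppose `F x = F y` with `x ≠ y` in the unit cube, and let `j` be a coordinate where `|yᵢ - xᵢ|`
is maximal, say `d = yⱼ - xⱼ > 0`. For the corner `z = -eⱼ + 3eⱼ'` the criterion gives a row `k`
with `F'(z)(y - z)ₖ > 0` (as `y - z = y + (eⱼ - 3eⱼ')` and `F'(z) y ≥ 0`). Adding the convexity
inequalities along `x → z → y` then yields `F'(x)(x - z)ₖ > 0`. But `(d/2)(x - z) ≤ y - x`
coordinatewise, so monotonicity gives `F'(x)(y - x)ₖ > 0`, contradicting convexity between
`x` and `y`, which says `F'(x)(y - x) ≤ F y - F x = 0`.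
-/

open Matrix Set

theorem Matrix.mulVec_le_mulVec_of_nonneg {ι κ : Type*} [Fintype ι] {M : Matrix κ ι ℝ}
    (hM : ∀ k i, 0 ≤ M k i) {u v : ι → ℝ} (huv : u ≤ v) : M *ᵥ u ≤ M *ᵥ v :=
  fun k => dotProduct_le_dotProduct_of_nonneg_left huv (hM k)

section ConvexMonotone

variable {ι κ : Type*} [Fintype ι] {S : Set (ι → ℝ)} {F : (ι → ℝ) → κ → ℝ}
  {F' : (ι → ℝ) → Matrix κ ι ℝ}

theorem false_of_eq_of_smul_sub_le {x y z : ι → ℝ} (hmono : ∀ k i, 0 ≤ F' x k i)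
    (hconv : ∀ z ∈ S, ∀ w ∈ S, F' z *ᵥ (w - z) ≤ F w - F z)
    (hx : x ∈ S) (hy : y ∈ S) (hz : z ∈ S) (hxy : F x = F y)
    {t : ℝ} (ht : 0 < t) (hxz : t • (x - z) ≤ y - x)
    {k : κ} (hk : 0 < (F' z *ᵥ (y - z)) k) : False := by
  have hcyclic : F' x *ᵥ (z - x) + F' z *ᵥ (y - z) ≤ 0 := by
    simpa [hxy] using add_le_add (hconv x hx z hz) (hconv z hz y hy)
  have hpos : 0 < (F' x *ᵥ (x - z)) k := by
    have := hcyclic k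
    rw [← neg_sub, mulVec_neg]
    simp only [Pi.add_apply, Pi.zero_apply, Pi.neg_apply] at this ⊢
    linarith
  have hle : t * (F' x *ᵥ (x - z)) k ≤ (F' x *ᵥ (y - x)) k := by
    simpa [mulVec_smul] using mulVec_le_mulVec_of_nonneg hmono hxz k
  have hnonpos : (F' x *ᵥ (y - x)) k ≤ 0 := by simpa [hxy] using hconv x hx y hy k
  nlinarith [mul_pos ht hpos]

theorem eq_of_forall_abs_sub_le_sub [DecidableEq ι]
    (hS : Icc (fun _ => -1) (fun _ => 3) ⊆ S) (hmono : ∀ z ∈ S, ∀ k i, 0 ≤ F' z k i)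
    (hconv : ∀ z ∈ S, ∀ w ∈ S, F' z *ᵥ (w - z) ≤ F w - F z)
    {x y : ι → ℝ} (hx : x ∈ Icc 0 1) (hy : y ∈ Icc 0 1) (hxy : F x = F y)
    {j : ι} (hj : ∀ i, |y i - x i| ≤ y j - x j)
    (hcrit : ∃ k, 0 < (F' (fun i => if i = j then -1 else 3) *ᵥ
      (fun i => if i = j then 1 else -3)) k) : x = y := by
  by_contra hne
  obtain ⟨i₀, hi₀⟩ := Function.ne_iff.mp hne
  have hd : 0 < y j - x j := (abs_pos.2 (sub_ne_zero.2 hi₀.symm)).trans_le (hj i₀)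
  have hcube : Icc 0 1 ⊆ S :=
    (Icc_subset_Icc (fun _ => by norm_num) fun _ => by norm_num).trans hS
  set z : ι → ℝ := fun i => if i = j then -1 else 3
  have hzS : z ∈ S := hS ⟨fun i => by simp only [z]; split_ifs <;> norm_num,
    fun i => by simp only [z]; split_ifs <;> norm_num⟩
  obtain ⟨k, hk⟩ := hcrit
  refine false_of_eq_of_smul_sub_le (hmono x (hcube hx)) hconv (hcube hx) (hcube hy) hzS hxy
    (half_pos hd) (fun i => ?_) (k := k) ?_
  · have hxi : x i ≤ 1 := hx.2 i
    have hyi := neg_le_of_abs_le (hj i)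
    simp only [Pi.smul_apply, Pi.sub_apply, smul_eq_mul, z]
    split_ifs with hij
    · subst hij; nlinarith
    · nlinarith
  · have hyz : y - z = y + fun i => if i = j then 1 else -3 := by
      ext i; simp only [z, Pi.sub_apply, Pi.add_apply]; split_ifs <;> ring
    have hy_nonneg : (0 : κ → ℝ) ≤ F' z *ᵥ y := by
      simpa using mulVec_le_mulVec_of_nonneg (hmono z hzS) hy.1
    rw [hyz, mulVec_add, Pi.add_apply]
    exact add_pos_of_nonneg_of_pos (hy_nonneg k) hk

end ConvexMonotone

theorem stmt_3_general (n m : ℕ)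
    (U : Set (Fin n → ℝ))
    (hUsub : Set.Icc (fun _ => (-1:ℝ)) (fun _ => (3:ℝ)) ⊆ U)
    (F : (Fin n → ℝ) → (Fin m → ℝ))
    (F' : (Fin n → ℝ) → Matrix (Fin m) (Fin n) ℝ)
    (hmono : ∀ z ∈ U, ∀ k j, 0 ≤ F' z k j)
    (hconv : ∀ z ∈ U, ∀ w ∈ U, (F' z).mulVec (w - z) ≤ F w - F z)
    (hcrit : ∀ j : Fin n, ∃ k : Fin m,
      0 < ((F' (fun i => if i = j then -1 else 3)).mulVec
            (fun i => if i = j then 1 else -3)) k) :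
    Set.InjOn F (Set.Icc (0 : Fin n → ℝ) 1) := by
  intro x hx y hy hxy
  by_contra hne
  obtain ⟨i₀, -⟩ := Function.ne_iff.mp hne
  have : Nonempty (Fin n) := ⟨i₀⟩
  obtain ⟨j, hj⟩ := Finite.exists_max fun i => |y i - x i|
  rcases le_total (x j) (y j) with hle | hle
  · refine hne (eq_of_forall_abs_sub_le_sub hUsub hmono hconv hx hy hxy (fun i => ?_) (hcrit j))
    simpa [abs_of_nonneg (sub_nonneg.2 hle)] using hj i
  · refine hne (eq_of_forall_abs_sub_le_sub hUsub hmono hconv hy hx hxy.symm (fun i => ?_)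
      (hcrit j)).symm
    simpa [abs_sub_comm, abs_of_nonneg (sub_nonneg.2 hle)] using hj i

theorem stmt_3 (n m : ℕ) (hn : 2 ≤ n) (hnm : n ≤ m)
    (U : Set (Fin n → ℝ)) (hUopen : IsOpen U) (hUconv : Convex ℝ U)
    (hUsub : Set.Icc (fun _ => (-1:ℝ)) (fun _ => (3:ℝ)) ⊆ U)
    (F : (Fin n → ℝ) → (Fin m → ℝ))
    (F' : (Fin n → ℝ) → Matrix (Fin m) (Fin n) ℝ)
    (hderiv : ∀ z ∈ U, HasFDerivAt F ((F' z).mulVecLin.toContinuousLinearMap) z)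
    (hcont : ContinuousOn F' U)
    (hmono : ∀ z ∈ U, ∀ k j, 0 ≤ F' z k j)
    (hconv : ∀ z ∈ U, ∀ w ∈ U, (F' z).mulVec (w - z) ≤ F w - F z)
    (hcrit : ∀ j : Fin n, ∃ k : Fin m,
      0 < ((F' (fun i => if i = j then -1 else 3)).mulVec
            (fun i => if i = j then 1 else -3)) k) :
    Set.InjOn F (Set.Icc (0 : Fin n → ℝ) 1) :=
  stmt_3_general n m U hUsub F F' hmono hconv hcrit
end

section
/- Let F : U ⊆ ℝⁿ → ℝⁿ be continuously differentiable and pointwise convex (F(y) − F(x) ≥ F'(x)(y−x) entrywise) on a convex open set U containing 0, and let M ∈ ℝ^{n×n}. Suppose x ∈ U is such that F'(x) is invertible, M F'(x)⁻¹ ≥ 0 entrywise, F(x) ≥ 0 ≥ F(0), and Mx ≥ 0. Then for all t ∈ [0,1], the damped Newton point x⁽ᵗ⁾ := x − t F'(x)⁻¹ F(x) satisfies 0 ≤ M x⁽ᵗ⁾ ≤ M x entrywise; moreover, if x⁽ᵗ⁾ ∈ U then F(x⁽ᵗ⁾) ≥ (1−t) F(x) ≥ 0. -/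
/-!
Write `J = F'(x)` and `d = J⁻¹ F(x)`. Convexity between `x` and `0`, together with `F(0) ≤ 0`,
gives `F(x) ≤ J x`; applying to `0 ≤ F(x) ≤ J x` the entrywise nonnegative matrix `M J⁻¹` yields
`0 ≤ M d ≤ M x`, so `M (x - t d) = M x - t M d` lies between `0` and `M x`.
Convexity between `x` and `x - t d` gives `F(x - t d) ≥ F(x) + J(-t d) = (1 - t) F(x)`.
-/

open Matrix Set

namespace Matrix

variable {m n R : Type*} [Fintype n] [CommRing R] [PartialOrder R] [IsOrderedRing R]

theorem mulVec_mono_of_nonneg_s10 {A : Matrix m n R} (hA : ∀ i j, 0 ≤ A i j) {u v : n → R}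
    (huv : u ≤ v) : A *ᵥ u ≤ A *ᵥ v := fun i =>
  Finset.sum_le_sum fun j _ => mul_le_mul_of_nonneg_left (huv j) (hA i j)

variable [DecidableEq n]

theorem mulVec_inv_mulVec_mem_Icc {M : Matrix m n R} {J : Matrix n n R} (hJ : IsUnit J)
    (hMJ : ∀ i j, 0 ≤ (M * J⁻¹) i j) {b x : n → R} (hb : 0 ≤ b) (hbx : b ≤ J *ᵥ x) :
    0 ≤ M *ᵥ (J⁻¹ *ᵥ b) ∧ M *ᵥ (J⁻¹ *ᵥ b) ≤ M *ᵥ x := by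
  have hMx : M *ᵥ x = (M * J⁻¹) *ᵥ (J *ᵥ x) := by
    rw [mulVec_mulVec, Matrix.mul_assoc, nonsing_inv_mul _ ((isUnit_iff_isUnit_det J).mp hJ),
      Matrix.mul_one]
  rw [mulVec_mulVec, hMx]
  exact ⟨by simpa using mulVec_mono_of_nonneg_s10 hMJ hb, mulVec_mono_of_nonneg_s10 hMJ hbx⟩

theorem smul_le_apply_sub_smul_inv_mulVec {F : (n → R) → n → R} {J : Matrix n n R}
    (hJ : IsUnit J) {x : n → R} (t : R)
    (hconv : J *ᵥ ((x - t • (J⁻¹ *ᵥ F x)) - x) ≤ F (x - t • (J⁻¹ *ᵥ F x)) - F x) :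
    (1 - t) • F x ≤ F (x - t • (J⁻¹ *ᵥ F x)) := by
  rw [sub_sub_cancel_left, mulVec_neg, mulVec_smul, mulVec_mulVec,
    mul_nonsing_inv _ ((isUnit_iff_isUnit_det J).mp hJ), one_mulVec, neg_le_sub_iff_le_add,
    ← sub_le_iff_le_add', sub_le_comm] at hconv
  rwa [sub_smul, one_smul]

end Matrix

theorem sub_smul_mem_Icc {E : Type*} [AddCommGroup E] [PartialOrder E] [IsOrderedAddMonoid E]
    [Module ℝ E] [PosSMulMono ℝ E] {a b : E} (ha : 0 ≤ a) (hab : a ≤ b) {t : ℝ}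
    (ht : t ∈ Icc (0 : ℝ) 1) : 0 ≤ b - t • a ∧ b - t • a ≤ b :=
  ⟨sub_nonneg.2 ((smul_le_of_le_one_left ha ht.2).trans hab),
    sub_le_self _ (smul_nonneg ht.1 ha)⟩

theorem stmt_10_general (n : ℕ)
    (U : Set (Fin n → ℝ))
    (h0U : (0 : Fin n → ℝ) ∈ U)
    (F : (Fin n → ℝ) → (Fin n → ℝ))
    (F' : (Fin n → ℝ) → Matrix (Fin n) (Fin n) ℝ)
    (hconv : ∀ z ∈ U, ∀ w ∈ U, (F' z).mulVec (w - z) ≤ F w - F z)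
    (M : Matrix (Fin n) (Fin n) ℝ)
    (x : Fin n → ℝ) (hx : x ∈ U)
    (hinv : IsUnit (F' x))
    (hMF : ∀ i j, 0 ≤ (M * (F' x)⁻¹) i j)
    (hFx : 0 ≤ F x) (hF0 : F 0 ≤ 0) :
    ∀ t ∈ Set.Icc (0:ℝ) 1,
      0 ≤ M.mulVec (x - t • ((F' x)⁻¹.mulVec (F x))) ∧
      M.mulVec (x - t • ((F' x)⁻¹.mulVec (F x))) ≤ M.mulVec x ∧
      ((x - t • ((F' x)⁻¹.mulVec (F x))) ∈ U →
        (1 - t) • F x ≤ F (x - t • ((F' x)⁻¹.mulVec (F x))) ∧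
        0 ≤ (1 - t) • F x) := by
  intro t ht
  have hFx_le : F x ≤ F' x *ᵥ x := by
    have h := (hconv x hx 0 h0U).trans (sub_le_sub_right hF0 (F x))
    rwa [zero_sub, zero_sub, mulVec_neg, neg_le_neg_iff] at h
  obtain ⟨hMd, hMdx⟩ := mulVec_inv_mulVec_mem_Icc hinv hMF hFx hFx_le
  rw [mulVec_sub, mulVec_smul, and_assoc.symm]
  exact ⟨sub_smul_mem_Icc hMd hMdx ht, fun hy =>
    ⟨smul_le_apply_sub_smul_inv_mulVec hinv t (hconv x hx _ hy),
      smul_nonneg (sub_nonneg.2 ht.2) hFx⟩⟩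

theorem stmt_10 (n : ℕ) (hn : 2 ≤ n)
    (U : Set (Fin n → ℝ)) (hUopen : IsOpen U) (hUconv : Convex ℝ U)
    (h0U : (0 : Fin n → ℝ) ∈ U)
    (F : (Fin n → ℝ) → (Fin n → ℝ))
    (F' : (Fin n → ℝ) → Matrix (Fin n) (Fin n) ℝ)
    (hderiv : ∀ z ∈ U, HasFDerivAt F ((F' z).mulVecLin.toContinuousLinearMap) z)
    (hcont : ContinuousOn F' U)
    (hconv : ∀ z ∈ U, ∀ w ∈ U, (F' z).mulVec (w - z) ≤ F w - F z)
    (M : Matrix (Fin n) (Fin n) ℝ)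
    (x : Fin n → ℝ) (hx : x ∈ U)
    (hinv : IsUnit (F' x))
    (hMF : ∀ i j, 0 ≤ (M * (F' x)⁻¹) i j)
    (hFx : 0 ≤ F x) (hF0 : F 0 ≤ 0) (hMx : 0 ≤ M.mulVec x) :
    ∀ t ∈ Set.Icc (0:ℝ) 1,
      0 ≤ M.mulVec (x - t • ((F' x)⁻¹.mulVec (F x))) ∧
      M.mulVec (x - t • ((F' x)⁻¹.mulVec (F x))) ≤ M.mulVec x ∧
      ((x - t • ((F' x)⁻¹.mulVec (F x))) ∈ U →
        (1 - t) • F x ≤ F (x - t • ((F' x)⁻¹.mulVec (F x))) ∧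
        0 ≤ (1 - t) • F x) :=
  stmt_10_general n U h0U F F' hconv M x hx hinv hMF hFx hF0
end

section
/- Let F : U ⊆ ℝⁿ → ℝⁿ, n ≥ 2, be continuously differentiable, pointwise convex and monotonic on a convex open set U with [−2, n(n+3)]ⁿ ⊂ U, and assume F'(z⁽ʲ⁾)d⁽ʲ⁾ ≰ 0 for all j ∈ {1,…,n}, where z⁽ʲ⁾ := −2eⱼ + n(n+3)eⱼ' and d⁽ʲ⁾ := eⱼ − (n²+3n+1)eⱼ'. Then F is injective on [−1,n]ⁿ, F'(x) is invertible for all x ∈ [−1,n]ⁿ, and with L := (n+2)(min_j max_k eₖᵀ F'(z⁽ʲ⁾)d⁽ʲ⁾)⁻¹ one has ‖x−y‖_∞ ≤ L‖F(x)−F(y)‖_∞ and ‖F'(x)⁻¹‖_∞ ≤ L for all x, y ∈ [−1,n]ⁿ. -/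
/-!
Fix `x ∈ [-1, n]ⁿ` and a vector `v` whose max-norm is attained at a coordinate `j` with
`v j = ‖v‖`. Then `d⁽ʲ⁾ ≤ x - z⁽ʲ⁾` and `‖v‖ (x - z⁽ʲ⁾) ≤ (n + 2) v` entrywise. Convexity makes the
derivative monotone, `F'(z⁽ʲ⁾)(x - z⁽ʲ⁾) ≤ F'(x)(x - z⁽ʲ⁾)`, and nonnegative matrices preserve `≤`,
so `‖v‖ F'(z⁽ʲ⁾) d⁽ʲ⁾ ≤ (n + 2) F'(x) v`. Reading this at a coordinate where `F'(z⁽ʲ⁾) d⁽ʲ⁾` is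
maximal gives `‖v‖ ≤ L ‖F'(x) v‖`; with `v = y - x` and `F(y) - F(x) ≥ F'(x)(y - x)` it gives
`‖y - x‖ ≤ L ‖F(y) - F(x)‖`. Replacing `v` by `-v` covers the case of a negative extreme coordinate.
-/

open Matrix Set

section General

variable {ι : Type*} [Fintype ι]

theorem Matrix.mulVec_mono_of_nonneg_s12 {m : Type*} {A : Matrix m ι ℝ} (hA : ∀ i j, 0 ≤ A i j)
    {u w : ι → ℝ} (h : u ≤ w) : A *ᵥ u ≤ A *ᵥ w :=
  fun i => dotProduct_le_dotProduct_of_nonneg_left h (hA i)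

theorem Matrix.smul_mulVec_le_smul_mulVec {A B : Matrix ι ι ℝ} (hA : ∀ i j, 0 ≤ A i j)
    (hB : ∀ i j, 0 ≤ B i j) {d u v : ι → ℝ} {t c : ℝ} (ht : 0 ≤ t) (hd : d ≤ u)
    (hAB : A *ᵥ u ≤ B *ᵥ u) (hu : t • u ≤ c • v) : t • (A *ᵥ d) ≤ c • (B *ᵥ v) :=
  calc t • (A *ᵥ d) ≤ t • (A *ᵥ u) := smul_le_smul_of_nonneg_left (mulVec_mono_of_nonneg_s12 hA hd) ht
    _ ≤ t • (B *ᵥ u) := smul_le_smul_of_nonneg_left hAB ht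
    _ = B *ᵥ (t • u) := (mulVec_smul B t u).symm
    _ ≤ B *ᵥ (c • v) := mulVec_mono_of_nonneg_s12 hB hu
    _ = c • (B *ᵥ v) := mulVec_smul B c v

theorem mulVec_sub_le_of_convex {U : Set (ι → ℝ)} {F : (ι → ℝ) → ι → ℝ}
    {F' : (ι → ℝ) → Matrix ι ι ℝ} (hconv : ∀ z ∈ U, ∀ w ∈ U, F' z *ᵥ (w - z) ≤ F w - F z)
    {x z : ι → ℝ} (hx : x ∈ U) (hz : z ∈ U) : F' z *ᵥ (x - z) ≤ F' x *ᵥ (x - z) := by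
  have hzx := hconv z hz x hx
  have hxz := hconv x hx z hz
  rw [← neg_sub x z, mulVec_neg] at hxz
  intro i
  have := hzx i
  have := hxz i
  simp only [Pi.sub_apply, Pi.neg_apply] at *
  linarith

theorem apply_le_pi_norm (v : ι → ℝ) (i : ι) : v i ≤ ‖v‖ :=
  (le_abs_self _).trans (norm_le_pi_norm v i)

theorem exists_apply_eq_pi_norm_or_neg [Nonempty ι] (v : ι → ℝ) :
    ∃ j, v j = ‖v‖ ∨ -v j = ‖v‖ := by
  obtain ⟨j, hj⟩ := Finite.exists_max fun i => |v i|
  have hnorm : ‖v‖ = |v j| :=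
    le_antisymm ((pi_norm_le_iff_of_nonneg (abs_nonneg _)).2 hj) (norm_le_pi_norm v j)
  refine ⟨j, ?_⟩
  rw [hnorm]
  rcases abs_choice (v j) with h | h <;> [left; right] <;> linarith

theorem Matrix.isUnit_of_norm_le_mul_norm_mulVec {K : Type*} [NormedField K] [DecidableEq ι]
    {A : Matrix ι ι K} {C : ℝ} (h : ∀ v, ‖v‖ ≤ C * ‖A *ᵥ v‖) : IsUnit A := by
  refine mulVec_injective_iff_isUnit.1 fun v w hvw => sub_eq_zero.1 (norm_le_zero_iff.1 ?_)
  simpa [mulVec_sub, hvw] using h (v - w)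

theorem Matrix.norm_inv_mulVec_le {K : Type*} [NormedField K] [DecidableEq ι]
    {A : Matrix ι ι K} {C : ℝ} (h : ∀ v, ‖v‖ ≤ C * ‖A *ᵥ v‖) (d : ι → K) :
    ‖A⁻¹ *ᵥ d‖ ≤ C * ‖d‖ := by
  have hdet := (isUnit_iff_isUnit_det A).1 (isUnit_of_norm_le_mul_norm_mulVec h)
  simpa [mulVec_mulVec, mul_nonsing_inv A hdet] using h (A⁻¹ *ᵥ d)

theorem Set.injOn_of_norm_sub_le_mul_norm_sub {E F : Type*} [NormedAddCommGroup E]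
    [NormedAddCommGroup F] {f : E → F} {s : Set E} {C : ℝ}
    (h : ∀ x ∈ s, ∀ y ∈ s, ‖x - y‖ ≤ C * ‖f x - f y‖) : InjOn f s := fun x hx y hy hxy => by
  simpa [hxy, sub_eq_zero] using h x hx y hy

end General

section Corners

variable {n : ℕ}

/- `corner n j` and `criticalDirection n j` are the paper's `z⁽ʲ⁾` and `d⁽ʲ⁾`, and
`criticalMargin n F'` is `min_j max_k eₖᵀ F'(z⁽ʲ⁾) d⁽ʲ⁾`, so that
`L = (n + 2) / criticalMargin n F'`. -/
def corner (n : ℕ) (j : Fin n) : Fin n → ℝ := fun i => if i = j then -2 else n * (n + 3)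

def criticalDirection (n : ℕ) (j : Fin n) : Fin n → ℝ :=
  fun i => if i = j then 1 else -(n ^ 2 + 3 * n + 1)

noncomputable def criticalMargin (n : ℕ) (F' : (Fin n → ℝ) → Matrix (Fin n) (Fin n) ℝ) : ℝ :=
  ⨅ j, ⨆ k, (F' (corner n j) *ᵥ criticalDirection n j) k

theorem corner_mem_Icc (j : Fin n) :
    corner n j ∈ Icc (fun _ => (-2 : ℝ)) (fun _ => (n : ℝ) * (n + 3)) := by
  constructor <;> intro i <;> simp only [corner] <;> split_ifs <;>
    nlinarith [n.cast_nonneg (α := ℝ)]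

theorem Icc_subset_Icc_corners :
    Icc (fun _ : Fin n => (-1 : ℝ)) (fun _ => (n : ℝ)) ⊆
      Icc (fun _ => -2) (fun _ => (n : ℝ) * (n + 3)) :=
  fun x hx =>
    ⟨fun i => by linarith [hx.1 i], fun i => by nlinarith [hx.2 i, n.cast_nonneg (α := ℝ)]⟩

theorem criticalDirection_le_sub_corner {x : Fin n → ℝ}
    (hx : x ∈ Icc (fun _ => (-1 : ℝ)) (fun _ => (n : ℝ))) (j : Fin n) :
    criticalDirection n j ≤ x - corner n j := by
  intro i
  have := hx.1 i
  simp only [criticalDirection, corner, Pi.sub_apply]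
  split_ifs <;> nlinarith

theorem norm_smul_sub_corner_le [NeZero n] {x : Fin n → ℝ}
    (hx : x ∈ Icc (fun _ => (-1 : ℝ)) (fun _ => (n : ℝ))) {v : Fin n → ℝ} {j : Fin n}
    (hj : v j = ‖v‖) : ‖v‖ • (x - corner n j) ≤ ((n : ℝ) + 2) • v := by
  intro i
  have hxi := hx.2 i
  have hvi : -‖v‖ ≤ v i := neg_le_of_abs_le (norm_le_pi_norm v i)
  have hn : (1 : ℝ) ≤ n := by exact_mod_cast NeZero.one_le
  have hv := norm_nonneg v
  simp only [corner, Pi.smul_apply, Pi.sub_apply, smul_eq_mul]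
  split_ifs with hij
  · subst hij; rw [hj]; nlinarith
  · nlinarith [mul_le_mul_of_nonneg_left hxi hv,
      mul_nonneg hv (by nlinarith : (0 : ℝ) ≤ n ^ 2 + n - 2)]

theorem criticalMargin_pos [NeZero n] {F' : (Fin n → ℝ) → Matrix (Fin n) (Fin n) ℝ}
    (hcrit : ∀ j, ∃ k, 0 < (F' (corner n j) *ᵥ criticalDirection n j) k) :
    0 < criticalMargin n F' := by
  obtain ⟨j, hj⟩ := exists_eq_ciInf_of_finite
    (f := fun j => ⨆ k, (F' (corner n j) *ᵥ criticalDirection n j) k)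
  obtain ⟨k, hk⟩ := hcrit j
  rw [criticalMargin, ← hj]
  exact hk.trans_le (le_ciSup (finite_range _).bddAbove k)

end Corners

section Estimates

variable {n : ℕ} [NeZero n] {U : Set (Fin n → ℝ)} {F : (Fin n → ℝ) → Fin n → ℝ}
  {F' : (Fin n → ℝ) → Matrix (Fin n) (Fin n) ℝ}

theorem exists_norm_mul_criticalMargin_le_mulVec
    (hsub : Icc (fun _ => (-2 : ℝ)) (fun _ => (n : ℝ) * (n + 3)) ⊆ U)
    (hmono : ∀ z ∈ U, ∀ k j, 0 ≤ F' z k j)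
    (hconv : ∀ z ∈ U, ∀ w ∈ U, F' z *ᵥ (w - z) ≤ F w - F z)
    {x : Fin n → ℝ} (hx : x ∈ Icc (fun _ => (-1 : ℝ)) (fun _ => (n : ℝ)))
    {v : Fin n → ℝ} {j : Fin n} (hj : v j = ‖v‖) :
    ∃ k, ‖v‖ * criticalMargin n F' ≤ ((n : ℝ) + 2) * (F' x *ᵥ v) k := by
  obtain ⟨k, hk⟩ := exists_eq_ciSup_of_finite
    (f := fun k => (F' (corner n j) *ᵥ criticalDirection n j) k)
  have hz := hsub (corner_mem_Icc j)
  have hxU := hsub (Icc_subset_Icc_corners hx)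
  have hdomination := smul_mulVec_le_smul_mulVec (hmono _ hz) (hmono _ hxU) (norm_nonneg v)
    (criticalDirection_le_sub_corner hx j) (mulVec_sub_le_of_convex hconv hxU hz)
    (norm_smul_sub_corner_le hx hj) k
  refine ⟨k, le_trans ?_ hdomination⟩
  have hmargin : criticalMargin n F' ≤ (F' (corner n j) *ᵥ criticalDirection n j) k :=
    (ciInf_le (finite_range _).bddBelow j).trans hk.ge
  exact mul_le_mul_of_nonneg_left hmargin (norm_nonneg v)

theorem norm_mul_criticalMargin_le_norm_mulVec
    (hsub : Icc (fun _ => (-2 : ℝ)) (fun _ => (n : ℝ) * (n + 3)) ⊆ U)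
    (hmono : ∀ z ∈ U, ∀ k j, 0 ≤ F' z k j)
    (hconv : ∀ z ∈ U, ∀ w ∈ U, F' z *ᵥ (w - z) ≤ F w - F z)
    {x : Fin n → ℝ} (hx : x ∈ Icc (fun _ => (-1 : ℝ)) (fun _ => (n : ℝ))) (v : Fin n → ℝ) :
    ‖v‖ * criticalMargin n F' ≤ ((n : ℝ) + 2) * ‖F' x *ᵥ v‖ := by
  have hn : (0 : ℝ) ≤ n + 2 := by positivity
  obtain ⟨j, hj | hj⟩ := exists_apply_eq_pi_norm_or_neg v
  · obtain ⟨k, hk⟩ := exists_norm_mul_criticalMargin_le_mulVec hsub hmono hconv hx hj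
    exact hk.trans (mul_le_mul_of_nonneg_left (apply_le_pi_norm _ k) hn)
  · obtain ⟨k, hk⟩ := exists_norm_mul_criticalMargin_le_mulVec (v := -v) hsub hmono hconv hx
      (by rwa [norm_neg])
    rw [norm_neg, mulVec_neg] at hk
    exact hk.trans (mul_le_mul_of_nonneg_left (by simpa using apply_le_pi_norm (-(F' x *ᵥ v)) k) hn)

theorem norm_sub_mul_criticalMargin_le_of_apply_eq
    (hsub : Icc (fun _ => (-2 : ℝ)) (fun _ => (n : ℝ) * (n + 3)) ⊆ U)
    (hmono : ∀ z ∈ U, ∀ k j, 0 ≤ F' z k j)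
    (hconv : ∀ z ∈ U, ∀ w ∈ U, F' z *ᵥ (w - z) ≤ F w - F z)
    {x y : Fin n → ℝ} (hx : x ∈ Icc (fun _ => (-1 : ℝ)) (fun _ => (n : ℝ)))
    (hy : y ∈ Icc (fun _ => (-1 : ℝ)) (fun _ => (n : ℝ))) {j : Fin n} (hj : (x - y) j = ‖x - y‖) :
    ‖x - y‖ * criticalMargin n F' ≤ ((n : ℝ) + 2) * ‖F x - F y‖ := by
  obtain ⟨k, hk⟩ := exists_norm_mul_criticalMargin_le_mulVec hsub hmono hconv hy hj
  have hU : ∀ {w}, w ∈ Icc (fun _ => (-1 : ℝ)) (fun _ => (n : ℝ)) → w ∈ U :=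
    fun hw => hsub (Icc_subset_Icc_corners hw)
  refine hk.trans (mul_le_mul_of_nonneg_left ?_ (by positivity))
  exact (hconv y (hU hy) x (hU hx) k).trans (apply_le_pi_norm _ k)

theorem norm_sub_mul_criticalMargin_le
    (hsub : Icc (fun _ => (-2 : ℝ)) (fun _ => (n : ℝ) * (n + 3)) ⊆ U)
    (hmono : ∀ z ∈ U, ∀ k j, 0 ≤ F' z k j)
    (hconv : ∀ z ∈ U, ∀ w ∈ U, F' z *ᵥ (w - z) ≤ F w - F z)
    {x y : Fin n → ℝ} (hx : x ∈ Icc (fun _ => (-1 : ℝ)) (fun _ => (n : ℝ)))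
    (hy : y ∈ Icc (fun _ => (-1 : ℝ)) (fun _ => (n : ℝ))) :
    ‖x - y‖ * criticalMargin n F' ≤ ((n : ℝ) + 2) * ‖F x - F y‖ := by
  obtain ⟨j, hj | hj⟩ := exists_apply_eq_pi_norm_or_neg (x - y)
  · exact norm_sub_mul_criticalMargin_le_of_apply_eq hsub hmono hconv hx hy hj
  · rw [norm_sub_rev x y, norm_sub_rev (F x)]
    refine norm_sub_mul_criticalMargin_le_of_apply_eq hsub hmono hconv hy hx (j := j) ?_
    rwa [norm_sub_rev, ← neg_sub, Pi.neg_apply]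

end Estimates

theorem stmt_12_general (n : ℕ) (hn : 2 ≤ n)
    (U : Set (Fin n → ℝ))
    (hUsub : Set.Icc (fun _ => (-2:ℝ)) (fun _ => (n:ℝ) * ((n:ℝ) + 3)) ⊆ U)
    (F : (Fin n → ℝ) → (Fin n → ℝ))
    (F' : (Fin n → ℝ) → Matrix (Fin n) (Fin n) ℝ)
    (hmono : ∀ z ∈ U, ∀ k j, 0 ≤ F' z k j)
    (hconv : ∀ z ∈ U, ∀ w ∈ U, (F' z).mulVec (w - z) ≤ F w - F z)
    (hcrit : ∀ j : Fin n, ∃ k : Fin n,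
      0 < ((F' (fun i => if i = j then -2 else (n:ℝ) * ((n:ℝ) + 3))).mulVec
            (fun i => if i = j then 1 else -((n:ℝ)^2 + 3 * n + 1))) k)
    (L : ℝ)
    (hLdef : L = ((n:ℝ) + 2) * (⨅ j : Fin n, ⨆ k : Fin n,
      ((F' (fun i => if i = j then -2 else (n:ℝ) * ((n:ℝ) + 3))).mulVec
        (fun i => if i = j then 1 else -((n:ℝ)^2 + 3 * n + 1))) k)⁻¹) :
    Set.InjOn F (Set.Icc (fun _ => (-1:ℝ)) (fun _ => (n:ℝ))) ∧
    ∀ x ∈ Set.Icc (fun _ => (-1:ℝ)) (fun _ => (n:ℝ)),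
      IsUnit (F' x) ∧
      (∀ y ∈ Set.Icc (fun _ => (-1:ℝ)) (fun _ => (n:ℝ)),
        ‖x - y‖ ≤ L * ‖F x - F y‖) ∧
      ∀ d : Fin n → ℝ, ‖(F' x)⁻¹.mulVec d‖ ≤ L * ‖d‖ := by
  have : NeZero n := ⟨by omega⟩
  have hL : L = ((n : ℝ) + 2) * (criticalMargin n F')⁻¹ := hLdef
  have hscale : ∀ a c : ℝ, a * criticalMargin n F' ≤ ((n : ℝ) + 2) * c → a ≤ L * c := by
    intro a c h
    rwa [hL, mul_right_comm, ← div_eq_mul_inv, le_div_iff₀ (criticalMargin_pos hcrit)]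
  have hlip : ∀ x ∈ Icc (fun _ => (-1 : ℝ)) (fun _ => (n : ℝ)),
      ∀ y ∈ Icc (fun _ => (-1 : ℝ)) (fun _ => (n : ℝ)), ‖x - y‖ ≤ L * ‖F x - F y‖ :=
    fun x hx y hy => hscale _ _ (norm_sub_mul_criticalMargin_le hUsub hmono hconv hx hy)
  refine ⟨injOn_of_norm_sub_le_mul_norm_sub hlip, fun x hx => ?_⟩
  have hbound : ∀ v, ‖v‖ ≤ L * ‖F' x *ᵥ v‖ :=
    fun v => hscale _ _ (norm_mul_criticalMargin_le_norm_mulVec hUsub hmono hconv hx v)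
  exact ⟨isUnit_of_norm_le_mul_norm_mulVec hbound, hlip x hx, norm_inv_mulVec_le hbound⟩

theorem stmt_12 (n : ℕ) (hn : 2 ≤ n)
    (U : Set (Fin n → ℝ)) (hUopen : IsOpen U) (hUconv : Convex ℝ U)
    (hUsub : Set.Icc (fun _ => (-2:ℝ)) (fun _ => (n:ℝ) * ((n:ℝ) + 3)) ⊆ U)
    (F : (Fin n → ℝ) → (Fin n → ℝ))
    (F' : (Fin n → ℝ) → Matrix (Fin n) (Fin n) ℝ)
    (hderiv : ∀ z ∈ U, HasFDerivAt F ((F' z).mulVecLin.toContinuousLinearMap) z)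
    (hcont : ContinuousOn F' U)
    (hmono : ∀ z ∈ U, ∀ k j, 0 ≤ F' z k j)
    (hconv : ∀ z ∈ U, ∀ w ∈ U, (F' z).mulVec (w - z) ≤ F w - F z)
    (hcrit : ∀ j : Fin n, ∃ k : Fin n,
      0 < ((F' (fun i => if i = j then -2 else (n:ℝ) * ((n:ℝ) + 3))).mulVec
            (fun i => if i = j then 1 else -((n:ℝ)^2 + 3 * n + 1))) k)
    (L : ℝ)
    (hLdef : L = ((n:ℝ) + 2) * (⨅ j : Fin n, ⨆ k : Fin n,
      ((F' (fun i => if i = j then -2 else (n:ℝ) * ((n:ℝ) + 3))).mulVec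
        (fun i => if i = j then 1 else -((n:ℝ)^2 + 3 * n + 1))) k)⁻¹) :
    Set.InjOn F (Set.Icc (fun _ => (-1:ℝ)) (fun _ => (n:ℝ))) ∧
    ∀ x ∈ Set.Icc (fun _ => (-1:ℝ)) (fun _ => (n:ℝ)),
      IsUnit (F' x) ∧
      (∀ y ∈ Set.Icc (fun _ => (-1:ℝ)) (fun _ => (n:ℝ)),
        ‖x - y‖ ≤ L * ‖F x - F y‖) ∧
      ∀ d : Fin n → ℝ, ‖(F' x)⁻¹.mulVec d‖ ≤ L * ‖d‖ :=
  stmt_12_general n hn U hUsub F F' hmono hconv hcrit L hLdef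
end

section
/- Let F : U ⊆ ℝⁿ → ℝⁿ, n ≥ 2, be continuously differentiable, pointwise convex and monotonic on a convex open set U ⊇ [−2,n(n+3)]ⁿ, satisfying F'(−2eⱼ + n(n+3)eⱼ')(eⱼ − (n²+3n+1)eⱼ') ≰ 0 for all j, and F(0) ≤ 0 ≤ F(𝟙). Then there exists a unique x̂ ∈ (−1/(n−1), 1+1/(n−1))ⁿ with F(x̂) = 0, and x̂ is the only zero of F in [−1,n]ⁿ. Moreover, the Newton iteration x⁽ᵏ⁺¹⁾ := x⁽ᵏ⁾ − F'(x⁽ᵏ⁾)⁻¹F(x⁽ᵏ⁾) with x⁽⁰⁾ := 𝟙 is well defined, stays in (−1,n)ⁿ, satisfies 0 ≤ Mx̂ ≤ Mx⁽ᵏ⁺¹⁾ ≤ Mx⁽ᵏ⁾ ≤ Mx⁽⁰⁾ = (n+1)𝟙 with M = 𝟙𝟙ᵀ + Iₙ, and converges to x̂. -/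
/-!
For `z ∈ [-1, n]ⁿ`, convexity makes `F'` monotone along the segment from `z` to the corner
`cⱼ = -2eⱼ + n(n+3)eⱼ'`; comparing `F'(z)` with `F'(cⱼ)` turns the hypothesis on `F'(cⱼ)` into
`F'(z) ≥ 0` and `F'(z)(eⱼ - n eⱼ') ≰ 0` for every `j`. For such a matrix `A`, a negative entry
of `y` with `Ay ≥ 0` is outweighed `n`-fold by another entry of `y`, which gives `My ≥ 0`; in
particular `A` is invertible. Along the Newton iteration convexity keeps `F(x⁽ᵏ⁾) ≥ 0`, so
`Mx⁽ᵏ⁾` decreases and stays nonnegative, which confines `x⁽ᵏ⁾` to `(-1, n)ⁿ` and makes it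
converge, necessarily to a zero. Two zeros `z, w` give `F'(z)(z - w) ≥ 0` and
`F'(w)(w - z) ≥ 0`, hence `M(z - w) = 0`.
-/

open Matrix Filter Finset Topology

namespace Matrix

/-- The matrix `M = 𝟙𝟙ᵀ + I` of the paper. -/
def onesAddOne (ι : Type*) [DecidableEq ι] : Matrix ι ι ℝ := of (fun _ _ => 1) + 1

variable {ι : Type*} [Fintype ι]

lemma mulVec_le_mulVec_of_nonneg_s15 {A : Matrix ι ι ℝ} (hA : ∀ k j, 0 ≤ A k j) {v w : ι → ℝ}
    (hvw : v ≤ w) : A *ᵥ v ≤ A *ᵥ w :=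
  fun k => dotProduct_le_dotProduct_of_nonneg_left hvw (hA k)

lemma add_card_sub_one_mul_le_sum {y : ι → ℝ} {s : ℝ} (hs : ∀ l, s ≤ y l) (m : ι) :
    y m + (Fintype.card ι - 1) * s ≤ ∑ l, y l := by
  have := single_le_sum (f := fun l => y l - s) (fun l _ => sub_nonneg.2 (hs l)) (mem_univ m)
  simp only [sum_sub_distrib, sum_const, card_univ, nsmul_eq_mul] at this
  linarith

variable [DecidableEq ι] {A B : Matrix ι ι ℝ} {y : ι → ℝ}

lemma mulVec_ite_apply (j k : ι) (a b : ℝ) :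
    (A *ᵥ fun i => if i = j then a else b) k = a * A k j + b * ∑ l ∈ univ.erase j, A k l := by
  rw [mulVec, dotProduct, ← add_sum_erase _ _ (mem_univ j), if_pos rfl, mul_sum, mul_comm]
  congr 1
  exact sum_congr rfl fun l hl => by rw [if_neg (ne_of_mem_erase hl), mul_comm]

/-- The paper's condition on a Jacobian: `A ≥ 0` and `A (eⱼ - c eⱼ') ≰ 0` for every `j`. -/
def IsDominant (c : ℝ) (A : Matrix ι ι ℝ) : Prop :=
  (∀ k j, 0 ≤ A k j) ∧ ∀ j, ∃ k, 0 < (A *ᵥ fun i => if i = j then 1 else -c) k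

lemma IsDominant.mul_neg_lt {c : ℝ} (hA : IsDominant c A)
    (hy : 0 ≤ A *ᵥ y) {u : ℝ} (hu : ∀ j, y j ≤ u) {i : ι} (hi : y i < 0) : c * -y i < u := by
  obtain ⟨k, hk⟩ := hA.2 i
  rw [mulVec_ite_apply] at hk
  set T := ∑ l ∈ univ.erase i, A k l
  have hT : 0 ≤ T := sum_nonneg fun l _ => hA.1 k l
  have hrow : 0 ≤ A k i * y i + T * u := calc
    0 ≤ (A *ᵥ y) k := hy k
    _ = A k i * y i + ∑ l ∈ univ.erase i, A k l * y l := by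
      rw [mulVec, dotProduct, ← add_sum_erase _ _ (mem_univ i)]
    _ ≤ A k i * y i + T * u := by
      rw [sum_mul]
      exact add_le_add_right
        (sum_le_sum fun l _ => mul_le_mul_of_nonneg_left (hu l) (hA.1 k l)) _
  by_contra! h
  nlinarith [mul_le_mul_of_nonneg_left h hT, mul_pos hk (neg_pos.2 hi)]

lemma onesAddOne_mulVec_apply (y : ι → ℝ) (i : ι) :
    (onesAddOne ι *ᵥ y) i = ∑ l, y l + y i := by
  rw [onesAddOne, add_mulVec, one_mulVec]
  simp [mulVec, dotProduct]

lemma onesAddOne_mulVec_one : onesAddOne ι *ᵥ 1 = fun _ => (Fintype.card ι : ℝ) + 1 := by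
  funext i
  simp [onesAddOne_mulVec_apply]

lemma isUnit_onesAddOne : IsUnit (onesAddOne ι) := by
  rw [← mulVec_injective_iff_isUnit]
  intro v w hvw
  have hi (i : ι) : ∑ l, v l + v i = ∑ l, w l + w i := by
    simpa only [onesAddOne_mulVec_apply] using congrFun hvw i
  have hsum : ∑ l, v l = ∑ l, w l := by
    have := sum_congr rfl fun i (_ : i ∈ univ) => hi i
    simp only [sum_add_distrib, sum_const, card_univ, nsmul_eq_mul] at this
    have : ((Fintype.card ι : ℝ) + 1) * (∑ l, v l - ∑ l, w l) = 0 := by linarith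
    exact sub_eq_zero.1 ((mul_eq_zero.1 this).resolve_left (by positivity))
  funext i
  linarith [hi i]

lemma IsDominant.onesAddOne_mulVec_nonneg (hA : IsDominant (Fintype.card ι) A)
    (hy : 0 ≤ A *ᵥ y) : 0 ≤ onesAddOne ι *ᵥ y := by
  intro i
  have : Nonempty ι := ⟨i⟩
  obtain ⟨p, hp⟩ := Finite.exists_min y
  obtain ⟨m, hm⟩ := Finite.exists_max y
  have hsum := add_card_sub_one_mul_le_sum hp m
  rw [Pi.zero_apply, onesAddOne_mulVec_apply]
  rcases le_or_gt 0 (y p) with hp0 | hp0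
  · linarith [sum_nonneg fun l (_ : l ∈ univ) => hp0.trans (hp l), hp i]
  · linarith [hA.mul_neg_lt hy hm hp0, hp i]

lemma IsDominant.eq_of_mulVec_sub_nonneg (hA : IsDominant (Fintype.card ι) A)
    (hB : IsDominant (Fintype.card ι) B) {z w : ι → ℝ} (hzw : 0 ≤ A *ᵥ (z - w))
    (hwz : 0 ≤ B *ᵥ (w - z)) : z = w := by
  have h₁ := hA.onesAddOne_mulVec_nonneg hzw
  have h₂ := hB.onesAddOne_mulVec_nonneg hwz
  rw [← neg_sub, mulVec_neg, neg_nonneg] at h₂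
  have h : onesAddOne ι *ᵥ (z - w) = onesAddOne ι *ᵥ 0 := by
    rw [mulVec_zero]; exact le_antisymm h₂ h₁
  exact sub_eq_zero.1 ((mulVec_injective_iff_isUnit.2 isUnit_onesAddOne) h)

lemma IsDominant.isUnit (hA : IsDominant (Fintype.card ι) A) : IsUnit A := by
  refine mulVec_injective_iff_isUnit.1 fun v w hvw => hA.eq_of_mulVec_sub_nonneg hA ?_ ?_ <;>
    simp [mulVec_sub, hvw]

lemma IsDominant.bounds_of_onesAddOne_mulVec_le (hn : 2 ≤ Fintype.card ι)
    (hA : IsDominant (Fintype.card ι) A) (hy : 0 ≤ A *ᵥ y)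
    (hM : onesAddOne ι *ᵥ y ≤ fun _ => (Fintype.card ι : ℝ) + 1) (i : ι) :
    -1 < y i ∧ y i < (Fintype.card ι : ℝ) := by
  have : Nonempty ι := ⟨i⟩
  have hn : (2 : ℝ) ≤ Fintype.card ι := by exact_mod_cast hn
  set n : ℝ := (Fintype.card ι : ℝ)
  obtain ⟨p, hp⟩ := Finite.exists_min y
  obtain ⟨m, hm⟩ := Finite.exists_max y
  have hsum := add_card_sub_one_mul_le_sum hp m
  have hMm := hM m
  rw [onesAddOne_mulVec_apply] at hMm
  have hmax : y m < n := by
    rcases le_or_gt 0 (y p) with hp0 | hp0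
    · nlinarith
    · have := hA.mul_neg_lt hy hm hp0
      nlinarith
  refine ⟨?_, (hm i).trans_lt hmax⟩
  by_contra! hi
  nlinarith [hA.mul_neg_lt hy hm (hi.trans_lt neg_one_lt_zero)]

lemma IsDominant.bounds_of_mulVec_one_sub_nonneg (hn : 2 ≤ Fintype.card ι)
    (hA : IsDominant (Fintype.card ι) A) (hB : IsDominant (Fintype.card ι) B)
    (hy : 0 ≤ A *ᵥ y) (hy' : 0 ≤ B *ᵥ (1 - y)) (i : ι) :
    -(1 / ((Fintype.card ι : ℝ) - 1)) < y i ∧ y i < 1 + 1 / ((Fintype.card ι : ℝ) - 1) := by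
  have : Nonempty ι := ⟨i⟩
  have hn : (2 : ℝ) ≤ Fintype.card ι := by exact_mod_cast hn
  set n : ℝ := (Fintype.card ι : ℝ)
  obtain ⟨p, hp⟩ := Finite.exists_min y
  obtain ⟨m, hm⟩ := Finite.exists_max y
  have hmax : y m * (n - 1) < n := by
    rcases le_or_gt (y m) 1 with hm1 | hm1
    · nlinarith
    have hu (j : ι) : (1 - y) j ≤ 1 - y p := by
      simp only [Pi.sub_apply, Pi.one_apply]
      linarith [hp j]
    have h1 : n * (y m - 1) < 1 - y p := by
      simpa using hB.mul_neg_lt hy' hu (i := m) (by simpa using hm1)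
    rcases le_or_gt 0 (y p) with hp0 | hp0
    · nlinarith
    · nlinarith [hA.mul_neg_lt hy hm hp0]
  have hn1 : 0 < n - 1 := by linarith
  constructor
  · rw [← neg_div, div_lt_iff₀ hn1]
    by_contra! hi
    have hi0 : y i < 0 := by nlinarith
    nlinarith [hA.mul_neg_lt hy hm hi0]
  · rw [show 1 + 1 / (n - 1) = n / (n - 1) by field_simp; ring, lt_div_iff₀ hn1]
    nlinarith [hm i]

end Matrix

variable {ι : Type*} [Fintype ι]

lemma mulVec_sub_nonneg_of_le {S : Set (ι → ℝ)} {F : (ι → ℝ) → ι → ℝ}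
    {F' : (ι → ℝ) → Matrix ι ι ℝ} (hconv : ∀ z ∈ S, ∀ w ∈ S, F' z *ᵥ (w - z) ≤ F w - F z)
    {z w : ι → ℝ} (hz : z ∈ S) (hw : w ∈ S) (hF : F w ≤ F z) : 0 ≤ F' z *ᵥ (z - w) := by
  have h := hconv z hz w hw
  rw [← neg_sub, mulVec_neg] at h
  intro i
  have h := h i
  have hF := hF i
  simp only [Pi.neg_apply, Pi.sub_apply, Pi.zero_apply] at h hF ⊢
  linarith

lemma newton_limit_eq_zero {F : (ι → ℝ) → ι → ℝ} {F' : (ι → ℝ) → Matrix ι ι ℝ}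
    {x : ℕ → ι → ℝ} {z : ι → ℝ} (hx : Tendsto x atTop (𝓝 z)) (hF : ContinuousAt F z)
    (hF' : ContinuousAt F' z) (hstep : ∀ k, F' (x k) *ᵥ (x (k + 1) - x k) = -F (x k)) :
    F z = 0 := by
  have hFx : Tendsto (fun k => F (x k)) atTop (𝓝 (F z)) := hF.tendsto.comp hx
  have hstep' :
      Tendsto (fun k => F' (x k) *ᵥ (x k - x (k + 1))) atTop (𝓝 (F' z *ᵥ (z - z))) :=
    ((continuous_fst.matrix_mulVec continuous_snd).tendsto _).comp
      ((hF'.tendsto.comp hx).prodMk_nhds (hx.sub (hx.comp (tendsto_add_atTop_nat 1))))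
  rw [sub_self, mulVec_zero] at hstep'
  refine tendsto_nhds_unique hFx (hstep'.congr fun k => ?_)
  rw [← neg_sub, mulVec_neg, hstep, neg_neg]

variable [DecidableEq ι]

lemma mulVec_sub_inv_mulVec {A : Matrix ι ι ℝ} (hA : IsUnit A) (x v : ι → ℝ) :
    A *ᵥ (x - A⁻¹ *ᵥ v - x) = -v := by
  rw [sub_sub_cancel_left, mulVec_neg, mulVec_mulVec,
    mul_nonsing_inv _ ((isUnit_iff_isUnit_det A).1 hA), one_mulVec]

lemma exists_tendsto_of_antitone_mulVec {M : Matrix ι ι ℝ} (hM : IsUnit M) {x : ℕ → ι → ℝ}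
    (hanti : Antitone fun k => M *ᵥ x k) (hbdd : BddBelow (Set.range fun k => M *ᵥ x k)) :
    ∃ z, Tendsto x atTop (𝓝 z) ∧ ∀ k, M *ᵥ z ≤ M *ᵥ x k := by
  have hdet := (isUnit_iff_isUnit_det M).1 hM
  refine ⟨M⁻¹ *ᵥ ⨅ k, M *ᵥ x k, ?_, fun k => ?_⟩
  · have h := ((continuous_const (y := M⁻¹).matrix_mulVec continuous_id).tendsto _).comp
      (tendsto_atTop_ciInf hanti hbdd)
    simpa [Function.comp_def, mulVec_mulVec, nonsing_inv_mul _ hdet] using h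
  · rw [mulVec_mulVec, mul_nonsing_inv _ hdet, one_mulVec]
    exact ciInf_le hbdd k

lemma isDominant_of_corner {U : Set (ι → ℝ)} {F : (ι → ℝ) → ι → ℝ}
    {F' : (ι → ℝ) → Matrix ι ι ℝ}
    (hUsub : Set.Icc (fun _ => (-2:ℝ))
      (fun _ => (Fintype.card ι : ℝ) * ((Fintype.card ι : ℝ) + 3)) ⊆ U)
    (hmono : ∀ z ∈ U, ∀ k j, 0 ≤ F' z k j)
    (hconv : ∀ z ∈ U, ∀ w ∈ U, F' z *ᵥ (w - z) ≤ F w - F z)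
    (hcrit : ∀ j : ι, ∃ k : ι,
      0 < (F' (fun i => if i = j then -2
                else (Fintype.card ι : ℝ) * ((Fintype.card ι : ℝ) + 3)) *ᵥ
        (fun i => if i = j then 1
          else -((Fintype.card ι : ℝ) ^ 2 + 3 * Fintype.card ι + 1))) k)
    {z : ι → ℝ} (hz : z ∈ Set.Icc (fun _ => (-1:ℝ)) (fun _ => (Fintype.card ι : ℝ))) :
    IsDominant (Fintype.card ι) (F' z) := by
  set n : ℝ := (Fintype.card ι : ℝ)
  have hn : 0 ≤ n := Nat.cast_nonneg _
  have hzU : z ∈ U := hUsub ⟨fun i => by linarith [hz.1 i], fun i => by nlinarith [hz.2 i]⟩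
  refine ⟨hmono z hzU, fun j => ?_⟩
  set c : ι → ℝ := fun i => if i = j then -2 else n * (n + 3)
  have hcU : c ∈ U := hUsub ⟨fun i => by dsimp only [c]; split_ifs <;> nlinarith,
    fun i => by dsimp only [c]; split_ifs <;> nlinarith⟩
  obtain ⟨k, hk⟩ := hcrit j
  refine ⟨k, ?_⟩
  have hgrad : F' z *ᵥ (c - z) ≤ F' c *ᵥ (c - z) := by
    have h₂ := hconv c hcU z hzU
    rw [← neg_sub, mulVec_neg] at h₂
    intro i
    have h₁ := hconv z hzU c hcU i
    have h₂ := h₂ i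
    simp only [Pi.sub_apply, Pi.neg_apply] at h₁ h₂
    linarith
  have hle_c : F' c *ᵥ (c - z) ≤
      F' c *ᵥ -(fun i => if i = j then 1 else -(n ^ 2 + 3 * n + 1)) := by
    refine mulVec_le_mulVec_of_nonneg_s15 (hmono c hcU) fun i => ?_
    rcases eq_or_ne i j with rfl | h <;> simp [c, *] <;> linarith [hz.1 i]
  have hle_z :
      F' z *ᵥ ((n + 2) • -(fun i => if i = j then 1 else -n)) ≤ F' z *ᵥ (c - z) := by
    refine mulVec_le_mulVec_of_nonneg_s15 (hmono z hzU) fun i => ?_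
    rcases eq_or_ne i j with rfl | h <;> simp [c, *] <;> nlinarith [hz.2 i]
  have := (hle_z.trans (hgrad.trans hle_c)) k
  simp only [mulVec_smul, mulVec_neg, Pi.smul_apply, Pi.neg_apply, smul_eq_mul] at this
  nlinarith

section Box

variable {F : (ι → ℝ) → ι → ℝ} {F' : (ι → ℝ) → Matrix ι ι ℝ}

local notation "S" => Set.Icc (fun _ => (-1 : ℝ)) (fun _ => (Fintype.card ι : ℝ))

lemma newton_step (hn : 2 ≤ Fintype.card ι)
    (hconv : ∀ z ∈ S, ∀ w ∈ S, F' z *ᵥ (w - z) ≤ F w - F z) (hF0 : F 0 ≤ 0)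
    {x x' : ι → ℝ} (hx : x ∈ S) (hA : IsDominant (Fintype.card ι) (F' x)) (hFx : 0 ≤ F x)
    (hMx : onesAddOne ι *ᵥ x ≤ fun _ => (Fintype.card ι : ℝ) + 1)
    (hx' : F' x *ᵥ (x' - x) = -F x) :
    (∀ i, -1 < x' i ∧ x' i < (Fintype.card ι : ℝ)) ∧ 0 ≤ F x' ∧
      0 ≤ onesAddOne ι *ᵥ x' ∧ onesAddOne ι *ᵥ x' ≤ onesAddOne ι *ᵥ x := by
  have h0 : (0 : ι → ℝ) ∈ S := ⟨fun _ => by simp, fun _ => by simp⟩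
  -- convexity towards `0` gives `A x ≥ F x - F 0`, so `A x' = A x - F x ≥ -F 0 ≥ 0`
  have hAx' : 0 ≤ F' x *ᵥ x' := by
    have h := hconv x hx 0 h0
    rw [mulVec_sub, sub_eq_iff_eq_add] at hx'
    rw [zero_sub, mulVec_neg] at h
    rw [hx']
    intro i
    have h := h i
    have hF0 := hF0 i
    simp only [Pi.neg_apply, Pi.sub_apply, Pi.add_apply, Pi.zero_apply] at h hF0 ⊢
    linarith
  have hdec : onesAddOne ι *ᵥ x' ≤ onesAddOne ι *ᵥ x := by
    have h := hA.onesAddOne_mulVec_nonneg (y := x - x')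
      (by rw [← neg_sub, mulVec_neg, hx', neg_neg]; exact hFx)
    rwa [mulVec_sub, sub_nonneg] at h
  have hbox := hA.bounds_of_onesAddOne_mulVec_le hn hAx' (hdec.trans hMx)
  have hx'S : x' ∈ S := ⟨fun i => (hbox i).1.le, fun i => (hbox i).2.le⟩
  refine ⟨hbox, ?_, hA.onesAddOne_mulVec_nonneg hAx', hdec⟩
  have h := hconv x hx x' hx'S
  rw [hx'] at h
  intro i
  have h := h i
  simp only [Pi.neg_apply, Pi.sub_apply, Pi.zero_apply] at h ⊢
  linarith

lemma newton_iterate_invariant (hn : 2 ≤ Fintype.card ι)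
    (hconv : ∀ z ∈ S, ∀ w ∈ S, F' z *ᵥ (w - z) ≤ F w - F z)
    (hdom : ∀ z ∈ S, IsDominant (Fintype.card ι) (F' z)) (hF0 : F 0 ≤ 0) (hF1 : 0 ≤ F 1)
    {x : ℕ → ι → ℝ} (hx0 : x 0 = 1) (hxs : ∀ k, x (k + 1) = x k - (F' (x k))⁻¹ *ᵥ F (x k))
    (k : ℕ) : (∀ i, -1 < x k i ∧ x k i < (Fintype.card ι : ℝ)) ∧ 0 ≤ F (x k) ∧
      0 ≤ onesAddOne ι *ᵥ x k ∧ onesAddOne ι *ᵥ x k ≤ fun _ => (Fintype.card ι : ℝ) + 1 := by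
  have hn' : (2 : ℝ) ≤ Fintype.card ι := by exact_mod_cast hn
  induction k with
  | zero =>
    rw [hx0, onesAddOne_mulVec_one]
    refine ⟨fun i => ⟨by norm_num, by rw [Pi.one_apply]; linarith⟩, hF1, fun i => ?_, le_rfl⟩
    simp only [Pi.zero_apply]
    positivity
  | succ k ih =>
    obtain ⟨hbox, hFx, -, hMx⟩ := ih
    have hxS : x k ∈ S := ⟨fun i => (hbox i).1.le, fun i => (hbox i).2.le⟩
    have hA := hdom _ hxS
    obtain ⟨hbox', hFx', hM', hdec⟩ :=
      newton_step (x' := x (k + 1)) hn hconv hF0 hxS hA hFx hMx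
        (by rw [hxs]; exact mulVec_sub_inv_mulVec hA.isUnit _ _)
    exact ⟨hbox', hFx', hM', hdec.trans hMx⟩

lemma newton_converges (hn : 2 ≤ Fintype.card ι)
    (hconv : ∀ z ∈ S, ∀ w ∈ S, F' z *ᵥ (w - z) ≤ F w - F z)
    (hdom : ∀ z ∈ S, IsDominant (Fintype.card ι) (F' z)) (hF0 : F 0 ≤ 0) (hF1 : 0 ≤ F 1)
    (hFc : ∀ z ∈ S, ContinuousAt F z) (hF'c : ∀ z ∈ S, ContinuousAt F' z)
    {x : ℕ → ι → ℝ} (hx0 : x 0 = 1) (hxs : ∀ k, x (k + 1) = x k - (F' (x k))⁻¹ *ᵥ F (x k)) :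
    (∀ k, IsUnit (F' (x k)) ∧ (∀ i, -1 < x k i ∧ x k i < (Fintype.card ι : ℝ)) ∧
      onesAddOne ι *ᵥ x (k + 1) ≤ onesAddOne ι *ᵥ x k) ∧
    ∃ z ∈ S, F z = 0 ∧ Tendsto x atTop (𝓝 z) ∧
      ∀ k, onesAddOne ι *ᵥ z ≤ onesAddOne ι *ᵥ x k := by
  have hinv := newton_iterate_invariant hn hconv hdom hF0 hF1 hx0 hxs
  have hxS (k : ℕ) : x k ∈ S := ⟨fun i => ((hinv k).1 i).1.le, fun i => ((hinv k).1 i).2.le⟩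
  have hunit (k : ℕ) : IsUnit (F' (x k)) := (hdom _ (hxS k)).isUnit
  have hstep (k : ℕ) : F' (x k) *ᵥ (x (k + 1) - x k) = -F (x k) := by
    rw [hxs]
    exact mulVec_sub_inv_mulVec (hunit k) _ _
  have hdec (k : ℕ) : onesAddOne ι *ᵥ x (k + 1) ≤ onesAddOne ι *ᵥ x k :=
    (newton_step hn hconv hF0 (hxS k) (hdom _ (hxS k)) (hinv k).2.1 (hinv k).2.2.2
      (hstep k)).2.2.2
  obtain ⟨z, hlim, hMz⟩ := exists_tendsto_of_antitone_mulVec isUnit_onesAddOne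
    (antitone_nat_of_succ_le hdec) ⟨0, by rintro _ ⟨k, rfl⟩; exact (hinv k).2.2.1⟩
  have hzS : z ∈ S := isClosed_Icc.mem_of_tendsto hlim (Eventually.of_forall hxS)
  exact ⟨fun k => ⟨hunit k, (hinv k).1, hdec k⟩, z, hzS,
    newton_limit_eq_zero hlim (hFc z hzS) (hF'c z hzS) hstep, hlim, hMz⟩

end Box

theorem stmt_15_general (n : ℕ) (hn : 2 ≤ n)
    (U : Set (Fin n → ℝ)) (hUopen : IsOpen U)
    (hUsub : Set.Icc (fun _ => (-2:ℝ)) (fun _ => (n:ℝ) * ((n:ℝ) + 3)) ⊆ U)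
    (F : (Fin n → ℝ) → (Fin n → ℝ))
    (F' : (Fin n → ℝ) → Matrix (Fin n) (Fin n) ℝ)
    (hderiv : ∀ z ∈ U, HasFDerivAt F ((F' z).mulVecLin.toContinuousLinearMap) z)
    (hcont : ContinuousOn F' U)
    (hmono : ∀ z ∈ U, ∀ k j, 0 ≤ F' z k j)
    (hconv : ∀ z ∈ U, ∀ w ∈ U, (F' z).mulVec (w - z) ≤ F w - F z)
    (hcrit : ∀ j : Fin n, ∃ k : Fin n,
      0 < ((F' (fun i => if i = j then -2 else (n:ℝ) * ((n:ℝ) + 3))).mulVec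
            (fun i => if i = j then 1 else -((n:ℝ)^2 + 3 * n + 1))) k)
    (hF0 : F 0 ≤ 0) (hF1 : 0 ≤ F 1)
    (M : Matrix (Fin n) (Fin n) ℝ)
    (hM : M = (Matrix.of fun _ _ => (1:ℝ)) + 1) :
    ∃ xhat : Fin n → ℝ,
      (∀ i, -(1 / ((n:ℝ) - 1)) < xhat i ∧ xhat i < 1 + 1 / ((n:ℝ) - 1)) ∧
      F xhat = 0 ∧
      (∀ z ∈ Set.Icc (fun _ => (-1:ℝ)) (fun _ => (n:ℝ)), F z = 0 → z = xhat) ∧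
      ∀ x : ℕ → (Fin n → ℝ), x 0 = 1 →
        (∀ k, x (k + 1) = x k - ((F' (x k))⁻¹).mulVec (F (x k))) →
        (∀ k, IsUnit (F' (x k)) ∧
          (∀ i, -1 < x k i ∧ x k i < (n:ℝ)) ∧
          0 ≤ M.mulVec xhat ∧
          M.mulVec xhat ≤ M.mulVec (x (k + 1)) ∧
          M.mulVec (x (k + 1)) ≤ M.mulVec (x k)) ∧
        M.mulVec (x 0) = (fun _ => (n:ℝ) + 1) ∧
        Tendsto x atTop (nhds xhat) := by
  obtain rfl : M = onesAddOne (Fin n) := hM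
  have hcard : (Fintype.card (Fin n) : ℝ) = n := by simp
  have hn' : 2 ≤ Fintype.card (Fin n) := by simpa using hn
  rw [← hcard] at hUsub hcrit ⊢
  set S := Set.Icc (fun _ : Fin n => (-1 : ℝ)) (fun _ => (Fintype.card (Fin n) : ℝ))
  have hSU : S ⊆ U := fun z hz => hUsub
    ⟨fun i => by linarith [hz.1 i], fun i => by nlinarith [hz.2 i, hz.1 i]⟩
  have h0S : (0 : Fin n → ℝ) ∈ S := ⟨fun _ => by simp, fun _ => by simp⟩
  have h1S : (1 : Fin n → ℝ) ∈ S :=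
    ⟨fun _ => by norm_num, fun _ => by simpa using (by omega : 1 ≤ n)⟩
  have hconvS : ∀ z ∈ S, ∀ w ∈ S, F' z *ᵥ (w - z) ≤ F w - F z :=
    fun z hz w hw => hconv z (hSU hz) w (hSU hw)
  have hdom : ∀ z ∈ S, IsDominant _ (F' z) :=
    fun z hz => isDominant_of_corner hUsub hmono hconv hcrit hz
  have hconverge (x : ℕ → Fin n → ℝ) := newton_converges (x := x) hn' hconvS hdom hF0 hF1
    (fun z hz => (hderiv z (hSU hz)).continuousAt)
    (fun z hz => hcont.continuousAt (hUopen.mem_nhds (hSU hz)))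
  obtain ⟨-, xhat, hxhatS, hFxhat, -, -⟩ :=
    hconverge (fun k => (fun y => y - (F' y)⁻¹ *ᵥ F y)^[k] 1) rfl
      fun k => Function.iterate_succ_apply' _ _ _
  have hxhat : 0 ≤ F' xhat *ᵥ xhat := by
    simpa using mulVec_sub_nonneg_of_le hconvS hxhatS h0S (hFxhat ▸ hF0)
  have huniq : ∀ z ∈ S, F z = 0 → z = xhat := fun z hz hFz =>
    (hdom z hz).eq_of_mulVec_sub_nonneg (hdom xhat hxhatS)
      (mulVec_sub_nonneg_of_le hconvS hz hxhatS (by rw [hFz, hFxhat]))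
      (mulVec_sub_nonneg_of_le hconvS hxhatS hz (by rw [hFz, hFxhat]))
  refine ⟨xhat, (hdom xhat hxhatS).bounds_of_mulVec_one_sub_nonneg hn' (hdom 1 h1S) hxhat
    (mulVec_sub_nonneg_of_le hconvS h1S hxhatS (hFxhat ▸ hF1)), hFxhat, huniq,
    fun x hx0 hxs => ?_⟩
  obtain ⟨hsteps, z, hzS, hFz, hlim, hMz⟩ := hconverge x hx0 hxs
  obtain rfl := huniq z hzS hFz
  exact ⟨fun k => ⟨(hsteps k).1, (hsteps k).2.1, (hdom z hzS).onesAddOne_mulVec_nonneg hxhat,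
    hMz (k + 1), (hsteps k).2.2⟩, by rw [hx0, onesAddOne_mulVec_one], hlim⟩

theorem stmt_15 (n : ℕ) (hn : 2 ≤ n)
    (U : Set (Fin n → ℝ)) (hUopen : IsOpen U) (hUconv : Convex ℝ U)
    (hUsub : Set.Icc (fun _ => (-2:ℝ)) (fun _ => (n:ℝ) * ((n:ℝ) + 3)) ⊆ U)
    (F : (Fin n → ℝ) → (Fin n → ℝ))
    (F' : (Fin n → ℝ) → Matrix (Fin n) (Fin n) ℝ)
    (hderiv : ∀ z ∈ U, HasFDerivAt F ((F' z).mulVecLin.toContinuousLinearMap) z)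
    (hcont : ContinuousOn F' U)
    (hmono : ∀ z ∈ U, ∀ k j, 0 ≤ F' z k j)
    (hconv : ∀ z ∈ U, ∀ w ∈ U, (F' z).mulVec (w - z) ≤ F w - F z)
    (hcrit : ∀ j : Fin n, ∃ k : Fin n,
      0 < ((F' (fun i => if i = j then -2 else (n:ℝ) * ((n:ℝ) + 3))).mulVec
            (fun i => if i = j then 1 else -((n:ℝ)^2 + 3 * n + 1))) k)
    (hF0 : F 0 ≤ 0) (hF1 : 0 ≤ F 1)
    (M : Matrix (Fin n) (Fin n) ℝ)
    (hM : M = (Matrix.of fun _ _ => (1:ℝ)) + 1) :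
    ∃ xhat : Fin n → ℝ,
      (∀ i, -(1 / ((n:ℝ) - 1)) < xhat i ∧ xhat i < 1 + 1 / ((n:ℝ) - 1)) ∧
      F xhat = 0 ∧
      (∀ z ∈ Set.Icc (fun _ => (-1:ℝ)) (fun _ => (n:ℝ)), F z = 0 → z = xhat) ∧
      ∀ x : ℕ → (Fin n → ℝ), x 0 = 1 →
        (∀ k, x (k + 1) = x k - ((F' (x k))⁻¹).mulVec (F (x k))) →
        (∀ k, IsUnit (F' (x k)) ∧
          (∀ i, -1 < x k i ∧ x k i < (n:ℝ)) ∧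
          0 ≤ M.mulVec xhat ∧
          M.mulVec xhat ≤ M.mulVec (x (k + 1)) ∧
          M.mulVec (x (k + 1)) ≤ M.mulVec (x k)) ∧
        M.mulVec (x 0) = (fun _ => (n:ℝ) + 1) ∧
        Tendsto x atTop (nhds xhat) :=
  stmt_15_general n hn U hUopen hUsub F F' hderiv hcont hmono hconv hcrit hF0 hF1 M hM
end

section
/- Let Ω ⊂ ℝ^d be a bounded Lipschitz domain, D ⊂⊂ Ω open with Lipschitz boundary Γ = ∂D, Γ₀ ⊆ Γ measurable with positive measure, and γ⁽¹⁾, γ⁽²⁾ ∈ L^∞₊(Γ) with γ⁽¹⁾ = γ⁽²⁾ on Γ∖Γ₀. For g ∈ L²(∂Ω) let u₁, u₂ ∈ H¹(Ω) be the solutions of the Robin transmission problem with coefficients γ⁽¹⁾, γ⁽²⁾ respectively. Then ‖u₂‖_{L²(Γ₀)} ≤ (1 + ‖γ⁽¹⁾−γ⁽²⁾‖_{L^∞(Γ₀)}/inf(γ⁽²⁾|_{Γ₀})) ‖u₁‖_{L²(Γ₀)}. -/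
open MeasureTheory

/-!
Put `d = u₂ - u₁`. Subtracting the two variational equations and testing with `d` gives
`B(d, d) + ∫_Γ γ₂ d² = ∫_Γ (γ₁ - γ₂) u₁ d`, and the right-hand integrand vanishes off `Γ₀`.
The left side is at least `(inf_{Γ₀} γ₂) ‖d‖²_{L²(Γ₀)}`, the right side at most
`‖γ₁ - γ₂‖_{L^∞(Γ₀)} ‖u₁‖_{L²(Γ₀)} ‖d‖_{L²(Γ₀)}` by Cauchy–Schwarz. Hence
`‖d‖ ≤ (‖γ₁ - γ₂‖_∞ / inf γ₂) ‖u₁‖` on `Γ₀`, and Minkowski's inequality for `u₂ = u₁ + d`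
concludes.
-/

section L2

variable {α : Type*} [MeasurableSpace α] {ν : Measure α} {f g : α → ℝ}

lemma integral_norm_rpow_two_eq_integral_sq (f : α → ℝ) :
    ∫ a, ‖f a‖ ^ (2 : ℝ) ∂ν = ∫ a, f a ^ 2 ∂ν := by
  simp only [Real.rpow_two, Real.norm_eq_abs, sq_abs]

lemma sqrt_integral_sq_eq_toReal_eLpNorm (hf : MemLp f 2 ν) :
    √(∫ a, f a ^ 2 ∂ν) = (eLpNorm f 2 ν).toReal := by
  rw [hf.eLpNorm_eq_integral_rpow_norm two_ne_zero ENNReal.ofNat_ne_top,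
    ENNReal.toReal_ofReal (by positivity), ENNReal.toReal_ofNat,
    integral_norm_rpow_two_eq_integral_sq, Real.sqrt_eq_rpow, one_div]

lemma sqrt_integral_add_sq_le (hf : MemLp f 2 ν) (hg : MemLp g 2 ν) :
    √(∫ a, (f a + g a) ^ 2 ∂ν) ≤ √(∫ a, f a ^ 2 ∂ν) + √(∫ a, g a ^ 2 ∂ν) := by
  rw [(sqrt_integral_sq_eq_toReal_eLpNorm (hf.add hg) : √(∫ a, (f a + g a) ^ 2 ∂ν) = _),
    sqrt_integral_sq_eq_toReal_eLpNorm hf, sqrt_integral_sq_eq_toReal_eLpNorm hg]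
  exact ENNReal.toReal_le_add (eLpNorm_add_le hf.1 hg.1 one_le_two) hf.eLpNorm_ne_top
    hg.eLpNorm_ne_top

lemma integral_abs_mul_abs_le (hf : MemLp f 2 ν) (hg : MemLp g 2 ν) :
    ∫ a, |f a| * |g a| ∂ν ≤ √(∫ a, f a ^ 2 ∂ν) * √(∫ a, g a ^ 2 ∂ν) := by
  have hpq : (2 : ℝ).HolderConjugate 2 := .two_two
  have := integral_mul_norm_le_Lp_mul_Lq hpq (by simpa using hf) (by simpa using hg)
  rw [integral_norm_rpow_two_eq_integral_sq, integral_norm_rpow_two_eq_integral_sq,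
    ← Real.sqrt_eq_rpow, ← Real.sqrt_eq_rpow] at this
  simpa only [Real.norm_eq_abs] using this

lemma integral_mul_mul_le_of_abs_le {γ : α → ℝ} {δ : ℝ} (hδ0 : 0 ≤ δ)
    (hδ : ∀ᵐ a ∂ν, |γ a| ≤ δ) (hf : MemLp f 2 ν) (hg : MemLp g 2 ν)
    (hγfg : Integrable (fun a => γ a * (f a * g a)) ν) :
    ∫ a, γ a * (f a * g a) ∂ν ≤ δ * (√(∫ a, f a ^ 2 ∂ν) * √(∫ a, g a ^ 2 ∂ν)) := by
  have hfg : Integrable (fun a => |f a| * |g a|) ν := by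
    simpa only [Pi.mul_apply, abs_mul] using (hf.integrable_mul hg).abs
  calc ∫ a, γ a * (f a * g a) ∂ν ≤ ∫ a, δ * (|f a| * |g a|) ∂ν := by
        refine integral_mono_ae hγfg (hfg.const_mul δ) ?_
        filter_upwards [hδ] with a ha
        rw [← abs_mul]
        calc γ a * (f a * g a) ≤ |γ a| * |f a * g a| := (le_abs_self _).trans_eq (abs_mul _ _)
          _ ≤ δ * |f a * g a| := by gcongr
    _ ≤ δ * (√(∫ a, f a ^ 2 ∂ν) * √(∫ a, g a ^ 2 ∂ν)) := by
        rw [integral_const_mul]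
        exact mul_le_mul_of_nonneg_left (integral_abs_mul_abs_le hf hg) hδ0

end L2

lemma le_div_mul_of_mul_sq_le {c δ x y : ℝ} (hc : 0 < c) (hx : 0 ≤ x) (hy : 0 ≤ y) (hδ : 0 ≤ δ)
    (h : c * x ^ 2 ≤ δ * (y * x)) : x ≤ δ / c * y := by
  rw [div_mul_eq_mul_div, le_div_iff₀ hc]
  rcases hx.eq_or_lt with rfl | hx
  · rw [zero_mul]; positivity
  · nlinarith

section Robin

variable {V : Type*} [AddCommGroup V] [Module ℝ V] {Γ : Type*} [MeasurableSpace Γ]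
  {μ : Measure Γ} {γ₁ γ₂ : Γ → ℝ}

lemma robin_solution_sub_eq {B : LinearMap.BilinForm ℝ V} {tr : V →ₗ[ℝ] Γ → ℝ}
    {ℓ : V →ₗ[ℝ] ℝ} {u₁ u₂ : V}
    (hInt₁ : ∀ v w : V, Integrable (fun s => γ₁ s * (tr v s * tr w s)) μ)
    (hInt₂ : ∀ v w : V, Integrable (fun s => γ₂ s * (tr v s * tr w s)) μ)
    (hu₁ : ∀ w : V, B u₁ w + ∫ s, γ₁ s * (tr u₁ s * tr w s) ∂μ = ℓ w)
    (hu₂ : ∀ w : V, B u₂ w + ∫ s, γ₂ s * (tr u₂ s * tr w s) ∂μ = ℓ w) (w : V) :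
    B (u₂ - u₁) w + ∫ s, γ₂ s * (tr (u₂ - u₁) s * tr w s) ∂μ =
      ∫ s, (γ₁ s - γ₂ s) * (tr u₁ s * tr w s) ∂μ := by
  have h₂ : ∫ s, γ₂ s * (tr (u₂ - u₁) s * tr w s) ∂μ =
      ∫ s, γ₂ s * (tr u₂ s * tr w s) ∂μ - ∫ s, γ₂ s * (tr u₁ s * tr w s) ∂μ := by
    rw [← integral_sub (hInt₂ u₂ w) (hInt₂ u₁ w)]
    congr 1 with s
    simp only [map_sub, Pi.sub_apply]
    ring
  have h₁₂ : ∫ s, (γ₁ s - γ₂ s) * (tr u₁ s * tr w s) ∂μ =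
      ∫ s, γ₁ s * (tr u₁ s * tr w s) ∂μ - ∫ s, γ₂ s * (tr u₁ s * tr w s) ∂μ := by
    rw [← integral_sub (hInt₁ u₁ w) (hInt₂ u₁ w)]
    simp only [sub_mul]
  rw [map_sub, LinearMap.sub_apply, h₂, h₁₂]
  linarith [hu₁ w, hu₂ w]

variable {Γ₀ : Set Γ} {f g : Γ → ℝ}

lemma sqrt_setIntegral_sq_le_of_energy_identity {E c δ : ℝ} (hE : 0 ≤ E)
    (henergy : E + ∫ s, γ₂ s * g s ^ 2 ∂μ = ∫ s, (γ₁ s - γ₂ s) * (f s * g s) ∂μ)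
    (hγ₂ : ∀ᵐ s ∂μ, 0 ≤ γ₂ s) (hc : 0 < c) (hcγ₂ : ∀ᵐ s ∂μ.restrict Γ₀, c ≤ γ₂ s)
    (hδ : 0 ≤ δ) (hγδ : ∀ᵐ s ∂μ.restrict Γ₀, |γ₁ s - γ₂ s| ≤ δ)
    (hEq : ∀ᵐ s ∂μ, s ∉ Γ₀ → γ₁ s = γ₂ s)
    (hf : MemLp f 2 (μ.restrict Γ₀)) (hg : MemLp g 2 (μ.restrict Γ₀))
    (hγ₂g : Integrable (fun s => γ₂ s * g s ^ 2) μ)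
    (hγfg : Integrable (fun s => (γ₁ s - γ₂ s) * (f s * g s)) μ) :
    √(∫ s in Γ₀, g s ^ 2 ∂μ) ≤ δ / c * √(∫ s in Γ₀, f s ^ 2 ∂μ) := by
  refine le_div_mul_of_mul_sq_le hc (Real.sqrt_nonneg _) (Real.sqrt_nonneg _) hδ ?_
  rw [Real.sq_sqrt (integral_nonneg fun s => sq_nonneg _)]
  calc c * ∫ s in Γ₀, g s ^ 2 ∂μ = ∫ s in Γ₀, c * g s ^ 2 ∂μ := (integral_const_mul _ _).symm
    _ ≤ ∫ s in Γ₀, γ₂ s * g s ^ 2 ∂μ := by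
      refine integral_mono_ae (hg.integrable_sq.const_mul c) hγ₂g.restrict ?_
      filter_upwards [hcγ₂] with s hs
      exact mul_le_mul_of_nonneg_right hs (sq_nonneg _)
    _ ≤ ∫ s, γ₂ s * g s ^ 2 ∂μ := by
      refine setIntegral_le_integral hγ₂g ?_
      filter_upwards [hγ₂] with s hs
      exact mul_nonneg hs (sq_nonneg _)
    _ ≤ ∫ s, (γ₁ s - γ₂ s) * (f s * g s) ∂μ := by linarith
    _ = ∫ s in Γ₀, (γ₁ s - γ₂ s) * (f s * g s) ∂μ := by
      refine (setIntegral_eq_integral_of_ae_compl_eq_zero ?_).symm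
      filter_upwards [hEq] with s hs hsΓ₀
      rw [hs hsΓ₀, sub_self, zero_mul]
    _ ≤ δ * (√(∫ s in Γ₀, f s ^ 2 ∂μ) * √(∫ s in Γ₀, g s ^ 2 ∂μ)) :=
      integral_mul_mul_le_of_abs_le hδ hγδ hf hg hγfg.restrict

end Robin

/-- Abstract formulation of the Robin transmission problem: `V` plays the role of
`H¹(Ω)`, `B` the Dirichlet bilinear form `∫_Ω ∇u·∇w dx`, `tr` the trace operator
onto the interface `Γ` (a measure space with measure `μ`), and `ℓ` the Neumann
boundary functional `w ↦ ∫_{∂Ω} g w ds`. -/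
theorem stmt_17_general
    {V : Type*} [AddCommGroup V] [Module ℝ V]
    {Γ : Type*} [MeasurableSpace Γ] (μ : Measure Γ)
    (Γ₀ : Set Γ)
    (B : LinearMap.BilinForm ℝ V)
    (hBpos : ∀ u : V, 0 ≤ B u u)
    (tr : V →ₗ[ℝ] Γ → ℝ) (hTrMeas : ∀ v : V, Measurable (tr v))
    (ℓ : V →ₗ[ℝ] ℝ)
    (γ₁ γ₂ : Γ → ℝ)
    -- γ₁, γ₂ ∈ L^∞₊(Γ): positive essential infima and essentially bounded
    (a₁ a₂ b₁ b₂ : ℝ) (ha₂ : 0 < a₂)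
    (hγ₁lb : ∀ᵐ s ∂μ, a₁ ≤ γ₁ s) (hγ₂lb : ∀ᵐ s ∂μ, a₂ ≤ γ₂ s)
    (hγ₁ub : ∀ᵐ s ∂μ, γ₁ s ≤ b₁) (hγ₂ub : ∀ᵐ s ∂μ, γ₂ s ≤ b₂)
    -- γ₁ = γ₂ on Γ ∖ Γ₀
    (hEq : ∀ᵐ s ∂μ, s ∉ Γ₀ → γ₁ s = γ₂ s)
    -- integrability of the interface terms
    (hInt : ∀ v w : V, Integrable (fun s => tr v s * tr w s) μ)
    (hInt₁ : ∀ v w : V, Integrable (fun s => γ₁ s * (tr v s * tr w s)) μ)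
    (hInt₂ : ∀ v w : V, Integrable (fun s => γ₂ s * (tr v s * tr w s)) μ)
    -- u₁, u₂ solve the variational Robin transmission problems for γ₁, γ₂
    (u₁ u₂ : V)
    (hu₁ : ∀ w : V, B u₁ w + ∫ s, γ₁ s * (tr u₁ s * tr w s) ∂μ = ℓ w)
    (hu₂ : ∀ w : V, B u₂ w + ∫ s, γ₂ s * (tr u₂ s * tr w s) ∂μ = ℓ w) :
    Real.sqrt (∫ s in Γ₀, (tr u₂ s) ^ 2 ∂μ) ≤
      (1 + (essSup (fun s => |γ₁ s - γ₂ s|) (μ.restrict Γ₀)) /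
            (essInf γ₂ (μ.restrict Γ₀))) *
        Real.sqrt (∫ s in Γ₀, (tr u₁ s) ^ 2 ∂μ) := by
  rcases eq_or_ne (μ Γ₀) 0 with hΓ₀ | hΓ₀
  · simp [Measure.restrict_eq_zero.mpr hΓ₀]
  have : NeZero (μ.restrict Γ₀) := ⟨Measure.restrict_eq_zero.not.mpr hΓ₀⟩
  set c := essInf γ₂ (μ.restrict Γ₀)
  set δ := essSup (fun s => |γ₁ s - γ₂ s|) (μ.restrict Γ₀)
  have hc : 0 < c := ha₂.trans_le <| le_essInf_of_ae_le _ (ae_restrict_of_ae hγ₂lb)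
    (Filter.isCoboundedUnder_ge_of_eventually_le _ (ae_restrict_of_ae hγ₂ub))
  have hcγ₂ : ∀ᵐ s ∂μ.restrict Γ₀, c ≤ γ₂ s := ae_essInf_le ⟨a₂, ae_restrict_of_ae hγ₂lb⟩
  have hγδ : ∀ᵐ s ∂μ.restrict Γ₀, |γ₁ s - γ₂ s| ≤ δ := by
    refine ae_le_essSup ⟨max (b₁ - a₂) (b₂ - a₁), ae_restrict_of_ae ?_⟩
    filter_upwards [hγ₁lb, hγ₁ub, hγ₂lb, hγ₂ub] with s h₁ h₁' h₂ h₂'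
    exact abs_sub_le_iff.mpr ⟨le_max_of_le_left (by linarith), le_max_of_le_right (by linarith)⟩
  have hδ : 0 ≤ δ := by
    obtain ⟨s, hs⟩ := hγδ.exists
    exact (abs_nonneg _).trans hs
  have hmem (v : V) : MemLp (tr v) 2 (μ.restrict Γ₀) :=
    ((memLp_two_iff_integrable_sq (hTrMeas v).aestronglyMeasurable).mpr
      (by simpa only [sq] using hInt v v)).restrict Γ₀
  have hdiff : √(∫ s in Γ₀, tr (u₂ - u₁) s ^ 2 ∂μ) ≤ δ / c * √(∫ s in Γ₀, tr u₁ s ^ 2 ∂μ) := by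
    have henergy := robin_solution_sub_eq hInt₁ hInt₂ hu₁ hu₂ (u₂ - u₁)
    simp only [← sq] at henergy
    refine sqrt_setIntegral_sq_le_of_energy_identity (hBpos _) henergy
      (hγ₂lb.mono fun s hs => ha₂.le.trans hs) hc hcγ₂ hδ hγδ hEq (hmem u₁) (hmem _)
      (by simpa only [sq] using hInt₂ (u₂ - u₁) (u₂ - u₁)) ?_
    exact ((hInt₁ _ _).sub (hInt₂ _ _)).congr (.of_forall fun s => (sub_mul _ _ _).symm)
  calc √(∫ s in Γ₀, tr u₂ s ^ 2 ∂μ) = √(∫ s in Γ₀, (tr u₁ s + tr (u₂ - u₁) s) ^ 2 ∂μ) := by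
        simp
    _ ≤ √(∫ s in Γ₀, tr u₁ s ^ 2 ∂μ) + √(∫ s in Γ₀, tr (u₂ - u₁) s ^ 2 ∂μ) :=
        sqrt_integral_add_sq_le (hmem u₁) (hmem _)
    _ ≤ (1 + δ / c) * √(∫ s in Γ₀, tr u₁ s ^ 2 ∂μ) := by linarith

/-- Abstract formulation of the Robin transmission problem: `V` plays the role of
`H¹(Ω)`, `B` the Dirichlet bilinear form `∫_Ω ∇u·∇w dx`, `tr` the trace operator
onto the interface `Γ` (a measure space with measure `μ`), and `ℓ` the Neumann
boundary functional `w ↦ ∫_{∂Ω} g w ds`. The solutions `u₁, u₂` satisfy the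
variational formulation with Robin coefficients `γ₁, γ₂` respectively. -/
theorem stmt_17
    {V : Type*} [AddCommGroup V] [Module ℝ V]
    {Γ : Type*} [MeasurableSpace Γ] (μ : Measure Γ)
    (Γ₀ : Set Γ) (hΓ₀meas : MeasurableSet Γ₀) (hΓ₀pos : 0 < μ Γ₀)
    (B : LinearMap.BilinForm ℝ V)
    (hBsymm : ∀ u w : V, B u w = B w u) (hBpos : ∀ u : V, 0 ≤ B u u)
    (tr : V →ₗ[ℝ] Γ → ℝ) (hTrMeas : ∀ v : V, Measurable (tr v))
    (ℓ : V →ₗ[ℝ] ℝ)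
    (γ₁ γ₂ : Γ → ℝ) (hγ₁meas : Measurable γ₁) (hγ₂meas : Measurable γ₂)
    -- γ₁, γ₂ ∈ L^∞₊(Γ): positive essential infima and essentially bounded
    (a₁ a₂ b₁ b₂ : ℝ) (ha₁ : 0 < a₁) (ha₂ : 0 < a₂)
    (hγ₁lb : ∀ᵐ s ∂μ, a₁ ≤ γ₁ s) (hγ₂lb : ∀ᵐ s ∂μ, a₂ ≤ γ₂ s)
    (hγ₁ub : ∀ᵐ s ∂μ, γ₁ s ≤ b₁) (hγ₂ub : ∀ᵐ s ∂μ, γ₂ s ≤ b₂)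
    -- γ₁ = γ₂ on Γ ∖ Γ₀
    (hEq : ∀ᵐ s ∂μ, s ∉ Γ₀ → γ₁ s = γ₂ s)
    -- integrability of the interface terms
    (hInt : ∀ v w : V, Integrable (fun s => tr v s * tr w s) μ)
    (hInt₁ : ∀ v w : V, Integrable (fun s => γ₁ s * (tr v s * tr w s)) μ)
    (hInt₂ : ∀ v w : V, Integrable (fun s => γ₂ s * (tr v s * tr w s)) μ)
    -- u₁, u₂ solve the variational Robin transmission problems for γ₁, γ₂
    (u₁ u₂ : V)
    (hu₁ : ∀ w : V, B u₁ w + ∫ s, γ₁ s * (tr u₁ s * tr w s) ∂μ = ℓ w)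
    (hu₂ : ∀ w : V, B u₂ w + ∫ s, γ₂ s * (tr u₂ s * tr w s) ∂μ = ℓ w) :
    Real.sqrt (∫ s in Γ₀, (tr u₂ s) ^ 2 ∂μ) ≤
      (1 + (essSup (fun s => |γ₁ s - γ₂ s|) (μ.restrict Γ₀)) /
            (essInf γ₂ (μ.restrict Γ₀))) *
        Real.sqrt (∫ s in Γ₀, (tr u₁ s) ^ 2 ∂μ) :=
  stmt_17_general μ Γ₀ B hBpos tr hTrMeas ℓ γ₁ γ₂ a₁ a₂ b₁ b₂ ha₂ hγ₁lb hγ₂lb hγ₁ub hγ₂ub hEq hInt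
    hInt₁ hInt₂ u₁ u₂ hu₁ hu₂
end

section
/- Let Ω ⊂ ℝ^d be a bounded Lipschitz domain and Γ a Lipschitz interface inside Ω. For each γ ∈ L^∞₊(Γ) and g ∈ L²(∂Ω), let u_γ^{(g)} ∈ H¹(Ω) be the unique solution of ∫_Ω ∇u·∇w dx + ∫_Γ γ u w ds = ∫_{∂Ω} g w ds for all w ∈ H¹(Ω), and let Λ(γ) : L²(∂Ω) → L²(∂Ω), g ↦ u_γ^{(g)}|_{∂Ω}. Then for all g ∈ L²(∂Ω) and all γ₁, γ₂ ∈ L^∞₊(Γ): ∫_{∂Ω} g (Λ(γ₂) − Λ(γ₁)) g ds ≥ −∫_Γ (γ₂ − γ₁) |u_{γ₁}^{(g)}|² ds, i.e. the Neumann-to-Dirichlet map is convex and anti-monotone with derivative given by the quadratic form δ ↦ −∫_Γ δ |u_γ^{(g)}|² ds. -/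
open MeasureTheory

section DirichletPrinciple

variable {R V : Type*} [CommRing R] [LinearOrder R] [IsStrictOrderedRing R]
  [AddCommGroup V] [Module R V]

/-- Dirichlet principle: the solution of `A u₀ = ℓ` maximizes `u ↦ 2 ℓ u - A u u`. -/
theorem LinearMap.BilinForm.IsPosSemidef.two_mul_sub_apply_self_le
    {A : LinearMap.BilinForm R V} (hA : A.IsPosSemidef) {ℓ : V →ₗ[R] R} {u₀ : V}
    (hu₀ : ∀ w, A u₀ w = ℓ w) (u : V) :
    2 * ℓ u - A u u ≤ ℓ u₀ := by
  have hexpand : A (u - u₀) (u - u₀) = A u u - 2 * ℓ u + ℓ u₀ := by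
    simp only [map_sub, LinearMap.sub_apply, hA.isSymm.eq u u₀, hu₀]
    ring
  linarith [hA.nonneg (u - u₀)]

end DirichletPrinciple

section WeightedTraceForm

variable {V Γ : Type*} [AddCommGroup V] [Module ℝ V] [MeasurableSpace Γ]

noncomputable def weightedTraceForm (μ : Measure Γ) (tr : V →ₗ[ℝ] Γ → ℝ) (γ : Γ → ℝ)
    (hγ : ∀ v w : V, Integrable (fun s => γ s * (tr v s * tr w s)) μ) :
    LinearMap.BilinForm ℝ V :=
  LinearMap.mk₂ ℝ (fun v w => ∫ s, γ s * (tr v s * tr w s) ∂μ)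
    (fun v₁ v₂ w => by
      simp only [map_add, Pi.add_apply, add_mul, mul_add]
      exact integral_add (hγ v₁ w) (hγ v₂ w))
    (fun c v w => by
      simp only [map_smul, Pi.smul_apply, smul_eq_mul, ← integral_const_mul]
      congr 1 with s
      ring)
    (fun v w₁ w₂ => by
      simp only [map_add, Pi.add_apply, mul_add]
      exact integral_add (hγ v w₁) (hγ v w₂))
    (fun c v w => by
      simp only [map_smul, Pi.smul_apply, smul_eq_mul, ← integral_const_mul]
      congr 1 with s
      ring)

variable (μ : Measure Γ) (tr : V →ₗ[ℝ] Γ → ℝ) {γ : Γ → ℝ}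
  (hγ : ∀ v w : V, Integrable (fun s => γ s * (tr v s * tr w s)) μ)

@[simp]
theorem weightedTraceForm_apply (v w : V) :
    weightedTraceForm μ tr γ hγ v w = ∫ s, γ s * (tr v s * tr w s) ∂μ :=
  rfl

theorem weightedTraceForm_isPosSemidef (hγ_nonneg : 0 ≤ᵐ[μ] γ) :
    (weightedTraceForm μ tr γ hγ).IsPosSemidef where
  eq v w := by
    simp only [weightedTraceForm_apply, mul_comm (tr v _)]
  nonneg v := by
    rw [weightedTraceForm_apply]
    exact integral_nonneg_of_ae <| hγ_nonneg.mono fun s hs => mul_nonneg hs (mul_self_nonneg _)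

end WeightedTraceForm

theorem stmt_18_general
    {V : Type*} [AddCommGroup V] [Module ℝ V]
    {Γ : Type*} [MeasurableSpace Γ] (μ : Measure Γ)
    (B : LinearMap.BilinForm ℝ V)
    (hBsymm : ∀ u w : V, B u w = B w u) (hBpos : ∀ u : V, 0 ≤ B u u)
    (tr : V →ₗ[ℝ] Γ → ℝ)
    (ℓ : V →ₗ[ℝ] ℝ)
    (γ₁ γ₂ : Γ → ℝ)
    (a₂ : ℝ) (ha₂ : 0 < a₂)
    (hγ₂lb : ∀ᵐ s ∂μ, a₂ ≤ γ₂ s)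
    (hInt₁ : ∀ v w : V, Integrable (fun s => γ₁ s * (tr v s * tr w s)) μ)
    (hInt₂ : ∀ v w : V, Integrable (fun s => γ₂ s * (tr v s * tr w s)) μ)
    (u₁ u₂ : V)
    (hu₁ : ∀ w : V, B u₁ w + ∫ s, γ₁ s * (tr u₁ s * tr w s) ∂μ = ℓ w)
    (hu₂ : ∀ w : V, B u₂ w + ∫ s, γ₂ s * (tr u₂ s * tr w s) ∂μ = ℓ w) :
    -(∫ s, (γ₂ s - γ₁ s) * (tr u₁ s) ^ 2 ∂μ) ≤ ℓ u₂ - ℓ u₁ := by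
  have hγ₂ : 0 ≤ᵐ[μ] γ₂ := hγ₂lb.mono fun s hs => ha₂.le.trans hs
  have hA : (B + weightedTraceForm μ tr γ₂ hInt₂).IsPosSemidef :=
    (⟨⟨hBsymm⟩, ⟨hBpos⟩⟩ : B.IsPosSemidef).add
      (weightedTraceForm_isPosSemidef μ tr hInt₂ hγ₂)
  have hmax := hA.two_mul_sub_apply_self_le (ℓ := ℓ) (u₀ := u₂) (by simpa using hu₂) u₁
  have hsplit : ∫ s, (γ₂ s - γ₁ s) * (tr u₁ s) ^ 2 ∂μ
      = (∫ s, γ₂ s * (tr u₁ s * tr u₁ s) ∂μ) - ∫ s, γ₁ s * (tr u₁ s * tr u₁ s) ∂μ := by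
    rw [← integral_sub (hInt₂ u₁ u₁) (hInt₁ u₁ u₁)]
    congr 1 with s
    ring
  simp only [LinearMap.add_apply, weightedTraceForm_apply] at hmax
  -- testing the equation for `u₁` with `u₁` turns `A₂ u₁ u₁` into `ℓ u₁ + ∫ (γ₂ - γ₁) (tr u₁)²`
  linarith [hu₁ u₁]

/-- Abstract formulation: `V` plays the role of `H¹(Ω)`, `B` the Dirichlet form
`∫_Ω ∇u·∇w dx`, `tr` the trace onto the interface `Γ`, and `ℓ` the functional
`w ↦ ∫_{∂Ω} g w ds`. Since `∫_{∂Ω} g (Λ(γ) g) ds = ℓ(u_γ)` (take `w = u_γ` in the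
variational formulation), the monotonicity estimate
`∫_{∂Ω} g (Λ(γ₂) − Λ(γ₁)) g ds ≥ −∫_Γ (γ₂−γ₁)|u_{γ₁}|² ds` reads
`ℓ(u₂) − ℓ(u₁) ≥ −∫_Γ (γ₂−γ₁) (tr u₁)² dμ`. -/
theorem stmt_18
    {V : Type*} [AddCommGroup V] [Module ℝ V]
    {Γ : Type*} [MeasurableSpace Γ] (μ : Measure Γ)
    (B : LinearMap.BilinForm ℝ V)
    (hBsymm : ∀ u w : V, B u w = B w u) (hBpos : ∀ u : V, 0 ≤ B u u)
    (tr : V →ₗ[ℝ] Γ → ℝ) (hTrMeas : ∀ v : V, Measurable (tr v))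
    (ℓ : V →ₗ[ℝ] ℝ)
    (γ₁ γ₂ : Γ → ℝ) (hγ₁meas : Measurable γ₁) (hγ₂meas : Measurable γ₂)
    (a₁ a₂ b₁ b₂ : ℝ) (ha₁ : 0 < a₁) (ha₂ : 0 < a₂)
    (hγ₁lb : ∀ᵐ s ∂μ, a₁ ≤ γ₁ s) (hγ₂lb : ∀ᵐ s ∂μ, a₂ ≤ γ₂ s)
    (hγ₁ub : ∀ᵐ s ∂μ, γ₁ s ≤ b₁) (hγ₂ub : ∀ᵐ s ∂μ, γ₂ s ≤ b₂)
    (hInt : ∀ v w : V, Integrable (fun s => tr v s * tr w s) μ)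
    (hInt₁ : ∀ v w : V, Integrable (fun s => γ₁ s * (tr v s * tr w s)) μ)
    (hInt₂ : ∀ v w : V, Integrable (fun s => γ₂ s * (tr v s * tr w s)) μ)
    (u₁ u₂ : V)
    (hu₁ : ∀ w : V, B u₁ w + ∫ s, γ₁ s * (tr u₁ s * tr w s) ∂μ = ℓ w)
    (hu₂ : ∀ w : V, B u₂ w + ∫ s, γ₂ s * (tr u₂ s * tr w s) ∂μ = ℓ w) :
    -(∫ s, (γ₂ s - γ₁ s) * (tr u₁ s) ^ 2 ∂μ) ≤ ℓ u₂ - ℓ u₁ :=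
  stmt_18_general μ B hBsymm hBpos tr ℓ γ₁ γ₂ a₂ ha₂ hγ₂lb hInt₁ hInt₂ u₁ u₂ hu₁ hu₂
end

section
/- Let H, H₀, H₁, …, H_K be Hilbert spaces, A₀ : H₀ → H and A_k : H_k → H (k = 1,…,K) bounded linear operators. If there exists a constant C > 0 such that ‖A₀* g‖² ≤ C ∑_{k=1}^K ‖A_k* g‖² for all g ∈ H, then Range(A₀) ⊆ Range(A₁) + ⋯ + Range(A_K). Equivalently (contrapositive): if Range(A₀) ⊄ Range(A₁)+⋯+Range(A_K), then for every C > 0 there exists g ∈ H with ‖A₀* g‖² > C ∑_k ‖A_k* g‖². -/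
/-!
Douglas' range inclusion: if `‖A₀† g‖ ≤ c ‖B† g‖`, the functional `B† g ↦ ⟪A₀ x, g⟫` is well
defined and bounded on the range of `B†`; extending it by Hahn–Banach and representing it by
Riesz gives `f` with `⟪B f, g⟫ = ⟪A₀ x, g⟫` for all `g`, i.e. `B f = A₀ x`. Apply this to the
row operator `B f = ∑ₖ Aₖ fₖ` on `PiLp 2 Hk`, whose adjoint is `g ↦ (Aₖ† g)ₖ`.
-/

open ContinuousLinearMap

section FactorThrough

variable {𝕜 E F : Type*} [RCLike 𝕜] [NormedAddCommGroup E] [NormedSpace 𝕜 E]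
  [NormedAddCommGroup F] [NormedSpace 𝕜 F]

theorem LinearMap.exists_strongDual_comp_eq_of_norm_le {T : E →ₗ[𝕜] F} {φ : E →ₗ[𝕜] 𝕜}
    {c : ℝ} (h : ∀ x, ‖φ x‖ ≤ c * ‖T x‖) : ∃ ψ : StrongDual 𝕜 F, ∀ x, ψ (T x) = φ x := by
  have hker : LinearMap.ker T ≤ LinearMap.ker φ := fun x hx => by
    simpa [LinearMap.mem_ker.mp hx] using h x
  let ψ₀ : LinearMap.range T →ₗ[𝕜] 𝕜 :=
    (LinearMap.ker T).liftQ φ hker ∘ₗ T.quotKerEquivRange.symm.toLinearMap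
  have hψ₀ : ∀ x, ψ₀ ⟨T x, LinearMap.mem_range_self T x⟩ = φ x := fun x => by
    simp [ψ₀, LinearMap.quotKerEquivRange_symm_apply_image]
  have hbound : ∀ z, ‖ψ₀ z‖ ≤ c * ‖z‖ := by
    rintro ⟨_, x, rfl⟩
    rw [hψ₀]
    exact h x
  obtain ⟨ψ, hψ, -⟩ := exists_extension_norm_eq _ (ψ₀.mkContinuous c hbound)
  exact ⟨ψ, fun x => (hψ _).trans (hψ₀ x)⟩

end FactorThrough

section Douglas

variable {𝕜 E F G : Type*} [RCLike 𝕜]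
  [NormedAddCommGroup E] [InnerProductSpace 𝕜 E] [CompleteSpace E]
  [NormedAddCommGroup F] [InnerProductSpace 𝕜 F] [CompleteSpace F]
  [NormedAddCommGroup G] [InnerProductSpace 𝕜 G] [CompleteSpace G]

theorem ContinuousLinearMap.range_subset_range_of_norm_adjoint_le {A : E →L[𝕜] F} {B : G →L[𝕜] F}
    {c : ℝ} (h : ∀ y, ‖adjoint A y‖ ≤ c * ‖adjoint B y‖) :
    Set.range A ⊆ Set.range B := by
  rintro _ ⟨x, rfl⟩
  have hbound : ∀ y, ‖innerₛₗ 𝕜 (A x) y‖ ≤ ‖x‖ * c * ‖adjoint B y‖ := fun y =>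
    calc ‖inner 𝕜 (A x) y‖ = ‖inner 𝕜 x (adjoint A y)‖ := by rw [adjoint_inner_right]
      _ ≤ ‖x‖ * ‖adjoint A y‖ := norm_inner_le_norm _ _
      _ ≤ ‖x‖ * (c * ‖adjoint B y‖) := by gcongr; exact h y
      _ = ‖x‖ * c * ‖adjoint B y‖ := by ring
  obtain ⟨ψ, hψ⟩ :=
    LinearMap.exists_strongDual_comp_eq_of_norm_le (T := (adjoint B : F →ₗ[𝕜] G)) hbound
  refine ⟨(InnerProductSpace.toDual 𝕜 G).symm ψ, ext_inner_right 𝕜 fun y => ?_⟩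
  rw [← adjoint_inner_right, InnerProductSpace.toDual_symm_apply]
  exact hψ y

end Douglas

section Block

variable {𝕜 H : Type*} [RCLike 𝕜] [NormedAddCommGroup H] [InnerProductSpace 𝕜 H]
  {ι : Type*} [Fintype ι] {Hk : ι → Type*} [∀ k, NormedAddCommGroup (Hk k)]
  [∀ k, InnerProductSpace 𝕜 (Hk k)]

noncomputable def ContinuousLinearMap.piLpCoprod (A : ∀ k, Hk k →L[𝕜] H) : PiLp 2 Hk →L[𝕜] H :=
  ∑ k, A k ∘L PiLp.proj 2 Hk k

theorem ContinuousLinearMap.piLpCoprod_apply (A : ∀ k, Hk k →L[𝕜] H) (f : PiLp 2 Hk) :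
    piLpCoprod A f = ∑ k, A k (f k) := by
  simp [piLpCoprod]

variable [CompleteSpace H] [∀ k, CompleteSpace (Hk k)]

theorem ContinuousLinearMap.adjoint_piLpCoprod_apply (A : ∀ k, Hk k →L[𝕜] H) (y : H) :
    adjoint (piLpCoprod A) y = WithLp.toLp 2 (fun k => adjoint (A k) y) := by
  refine ext_inner_left 𝕜 fun f => ?_
  rw [adjoint_inner_right, piLpCoprod_apply, sum_inner, PiLp.inner_apply]
  simp [adjoint_inner_right]

theorem ContinuousLinearMap.norm_adjoint_piLpCoprod_sq (A : ∀ k, Hk k →L[𝕜] H) (y : H) :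
    ‖adjoint (piLpCoprod A) y‖ ^ 2 = ∑ k, ‖adjoint (A k) y‖ ^ 2 := by
  simp [adjoint_piLpCoprod_apply, PiLp.norm_sq_eq_of_L2]

end Block

theorem stmt_19_general
    {H H₀ : Type*}
    [NormedAddCommGroup H] [InnerProductSpace ℝ H] [CompleteSpace H]
    [NormedAddCommGroup H₀] [InnerProductSpace ℝ H₀] [CompleteSpace H₀]
    {K : ℕ} {Hk : Fin K → Type*}
    [∀ k, NormedAddCommGroup (Hk k)] [∀ k, InnerProductSpace ℝ (Hk k)]
    [∀ k, CompleteSpace (Hk k)]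
    (A₀ : H₀ →L[ℝ] H) (A : ∀ k, Hk k →L[ℝ] H)
    (C : ℝ)
    (h : ∀ g : H, ‖adjoint A₀ g‖ ^ 2 ≤ C * ∑ k, ‖adjoint (A k) g‖ ^ 2) :
    ∀ y ∈ Set.range A₀, ∃ f : ∀ k, Hk k, y = ∑ k, A k (f k) := by
  have hnorm : ∀ g, ‖adjoint A₀ g‖ ≤ √C * ‖adjoint (piLpCoprod A) g‖ := fun g =>
    calc ‖adjoint A₀ g‖ = √(‖adjoint A₀ g‖ ^ 2) := (Real.sqrt_sq (norm_nonneg _)).symm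
      _ ≤ √(C * ‖adjoint (piLpCoprod A) g‖ ^ 2) := by
        rw [norm_adjoint_piLpCoprod_sq]
        exact Real.sqrt_le_sqrt (h g)
      _ = √C * ‖adjoint (piLpCoprod A) g‖ := by
        rw [Real.sqrt_mul' _ (sq_nonneg _), Real.sqrt_sq (norm_nonneg _)]
  intro y hy
  obtain ⟨f, rfl⟩ := range_subset_range_of_norm_adjoint_le hnorm hy
  exact ⟨f, piLpCoprod_apply A f⟩

theorem stmt_19
    {H H₀ : Type*}
    [NormedAddCommGroup H] [InnerProductSpace ℝ H] [CompleteSpace H]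
    [NormedAddCommGroup H₀] [InnerProductSpace ℝ H₀] [CompleteSpace H₀]
    {K : ℕ} {Hk : Fin K → Type*}
    [∀ k, NormedAddCommGroup (Hk k)] [∀ k, InnerProductSpace ℝ (Hk k)]
    [∀ k, CompleteSpace (Hk k)]
    (A₀ : H₀ →L[ℝ] H) (A : ∀ k, Hk k →L[ℝ] H)
    (C : ℝ) (hC : 0 < C)
    (h : ∀ g : H, ‖adjoint A₀ g‖ ^ 2 ≤ C * ∑ k, ‖adjoint (A k) g‖ ^ 2) :
    ∀ y ∈ Set.range A₀, ∃ f : ∀ k, Hk k, y = ∑ k, A k (f k) :=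
  stmt_19_general A₀ A C h
end
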